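/- arXiv:1808.08456 — 9 statements merged into one kernel-verified Lean document; each statement's English description precedes it below -/
import Mathlib

section
/- Let g ≥ 1, l ≥ 1 and h ≥ 1 be integers, let w₁, …, w_l be pairwise distinct elements of the free group F_{2g} = ⟨x₁, y₁, …, x_g, y_g⟩, and let c₁, …, c_l be nonzero integers that are either all positive or all negative. If there exist u₁, v₁, …, u_h, v_h ∈ F_{2g} with [u₁,v₁]⋯[u_h,v_h] = (B_g^{w₁})^{c₁} (B_g^{w₂})^{c₂} ⋯ (B_g^{w_l})^{c_l}, then (|c₁| + ⋯ + |c_l|)(2g − 1) ≤ 2h − 2 + l. -/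
/-!
Map `F_{2g}` to the group of lifts of circle homeomorphisms by a representation in which
`B_g` has translation number `2g - 1`: each `[xᵢ, yᵢ]` goes to a map moving some point by
almost `2`, and conjugating by translations lines these points up.
The translation number `τ` is a quasimorphism of defect one in the following sense: if `f`
moves some point by at least `m` and `g` moves some point by at least `n`, then `f * g` moves
some point by at least `m + n - 1`. Hence a product of `h` commutators has `τ ≤ 2h - 1`, while
`∏ (B_g^{wᵢ})^{cᵢ}` with all `cᵢ > 0` has `τ ≥ (∑ cᵢ)(2g - 1) - (l - 1)`. Negative exponents
reduce to positive ones by inverting the equation.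
-/

namespace SurfaceEq

open scoped commutatorElement

/-- The free group `F_{2g}` on `2g` generators `x₁,y₁,…,x_g,y_g`: the `x`-generators are
indexed by `Sum.inl`, the `y`-generators by `Sum.inr`. -/
abbrev Fg (g : ℕ) : Type := FreeGroup (Fin g ⊕ Fin g)

/-- The generator `xᵢ` of `F_{2g}`. -/
def xg {g : ℕ} (i : Fin g) : Fg g := FreeGroup.of (Sum.inl i)

/-- The generator `yᵢ` of `F_{2g}`. -/
def yg {g : ℕ} (i : Fin g) : Fg g := FreeGroup.of (Sum.inr i)

/-- `B_g = [x₁,y₁]⋯[x_g,y_g]`. -/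
def Bg (g : ℕ) : Fg g := (List.ofFn fun i : Fin g => ⁅xg i, yg i⁆).prod

end SurfaceEq

open scoped commutatorElement

theorem List.inv_prod_ofFn {G : Type*} [Group G] {n : ℕ} (f : Fin n → G) :
    (List.ofFn f).prod⁻¹ = (List.ofFn fun i => (f i.rev)⁻¹).prod := by
  induction n with
  | zero => simp
  | succ n ih =>
    rw [List.ofFn_succ, List.prod_cons, mul_inv_rev, ih, List.ofFn_succ', List.prod_concat]
    simp [Fin.rev_castSucc]

theorem Units.val_prod_ofFn {M : Type*} [Monoid M] {n : ℕ} (f : Fin n → Mˣ) :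
    ((List.ofFn f).prod : M) = (List.ofFn fun i => (f i : M)).prod := by
  simpa [List.map_ofFn, Function.comp_def] using map_list_prod (Units.coeHom M) (List.ofFn f)

namespace CircleDeg1Lift

local notation "τ" => translationNumber

theorem exists_add_le_mul_apply {f g : CircleDeg1Lift} {m n : ℝ}
    (hf : ∃ x, x + m ≤ f x) (hg : ∃ y, y + n ≤ g y) :
    ∃ z, z + (m + n - 1) ≤ (f * g) z := by
  obtain ⟨x, hx⟩ := hf
  obtain ⟨y, hy⟩ := hg
  have hk : x + ⌊g y - x⌋ ≤ g y := by linarith [Int.floor_le (g y - x)]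
  refine ⟨y, ?_⟩
  calc y + (m + n - 1) ≤ f x + ⌊g y - x⌋ := by linarith [Int.sub_one_lt_floor (g y - x)]
    _ = f (x + ⌊g y - x⌋) := (f.map_add_int x _).symm
    _ ≤ f (g y) := f.monotone hk

theorem exists_add_le_prod_ofFn_apply {l : ℕ} (hl : 1 ≤ l) (f : Fin l → CircleDeg1Lift)
    (m : Fin l → ℝ) (h : ∀ i, ∃ x, x + m i ≤ f i x) :
    ∃ x, x + (∑ i, m i - (l - 1)) ≤ (List.ofFn f).prod x := by
  induction l, hl using Nat.le_induction with
  | base => simpa using h 0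
  | succ l hl ih =>
    obtain ⟨x, hx⟩ := exists_add_le_mul_apply (h 0)
      (ih (fun i => f i.succ) (fun i => m i.succ) fun i => h i.succ)
    refine ⟨x, ?_⟩
    rw [List.ofFn_succ, List.prod_cons, Fin.sum_univ_succ]
    convert hx using 2
    push_cast
    ring

theorem exists_add_translationNumber_le (f : CircleDeg1Liftˣ) : ∃ x, x + τ f ≤ f x :=
  let ⟨x, hx⟩ := exists_eq_add_translationNumber (f : CircleDeg1Lift)
    (by simpa only [coe_toOrderIso] using (toOrderIso f).continuous)
  ⟨x, hx.ge⟩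

theorem exists_add_neg_one_le_commutatorElement_apply (a b : CircleDeg1Liftˣ) :
    ∃ x, x + (-1) ≤ (⁅a, b⁆ : CircleDeg1Liftˣ) x := by
  have hconj := exists_add_translationNumber_le (a * b * a⁻¹)
  have hinv := exists_add_translationNumber_le b⁻¹
  simp only [Units.val_mul, translationNumber_conj_eq] at hconj
  rw [translationNumber_units_inv] at hinv
  simpa [commutatorElement_def] using exists_add_le_mul_apply hconj hinv

theorem translationNumber_prod_commutatorElement_le {h : ℕ} (hh : 1 ≤ h)
    (a b : Fin h → CircleDeg1Liftˣ) :
    τ ((List.ofFn fun i => ⁅a i, b i⁆).prod : CircleDeg1Liftˣ) ≤ 2 * h - 1 := by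
  have hinv : (List.ofFn fun i => ⁅a i, b i⁆).prod⁻¹ =
      (List.ofFn fun i => ⁅b i.rev, a i.rev⁆).prod := by
    simp only [List.inv_prod_ofFn, commutatorElement_inv]
  obtain ⟨x, hx⟩ := exists_add_le_prod_ofFn_apply hh _ (fun _ => -1)
    fun i => exists_add_neg_one_le_commutatorElement_apply (b i.rev) (a i.rev)
  rw [← Units.val_prod_ofFn, ← hinv] at hx
  have hlower : ((-(2 * h - 1) : ℤ) : ℝ) ≤
      τ ((List.ofFn fun i => ⁅a i, b i⁆).prod⁻¹ : CircleDeg1Liftˣ) :=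
    le_translationNumber_of_add_int_le _ (x := x) (by push_cast; convert hx using 2; simp; ring)
  rw [translationNumber_units_inv] at hlower
  push_cast at hlower
  linarith

theorem le_translationNumber_prod_conj_zpow (β : CircleDeg1Liftˣ) {m : ℤ} (hβ : m ≤ τ β)
    {l : ℕ} (hl : 1 ≤ l) (w : Fin l → CircleDeg1Liftˣ) {c : Fin l → ℤ} (hc : ∀ i, 0 ≤ c i) :
    (((∑ i, c i) * m - ((l : ℤ) - 1) : ℤ) : ℝ) ≤
      τ ((List.ofFn fun i => (w i * β * (w i)⁻¹) ^ c i).prod : CircleDeg1Liftˣ) := by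
  have hcert (i : Fin l) :
      ∃ x, x + c i * m ≤ ((w i * β * (w i)⁻¹) ^ c i : CircleDeg1Liftˣ) x := by
    obtain ⟨x, hx⟩ := exists_add_translationNumber_le ((w i * β * (w i)⁻¹) ^ c i)
    rw [translationNumber_zpow, Units.val_mul, Units.val_mul, translationNumber_conj_eq] at hx
    exact ⟨x, le_trans (by gcongr; exact_mod_cast hc i) hx⟩
  obtain ⟨x, hx⟩ := exists_add_le_prod_ofFn_apply hl _ _ hcert
  rw [← Units.val_prod_ofFn] at hx
  refine le_translationNumber_of_add_int_le _ (x := x) ?_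
  push_cast
  rwa [Finset.sum_mul]

theorem sum_mul_le_of_prod_commutatorElement_eq_of_nonneg (β : CircleDeg1Liftˣ) {m : ℤ}
    (hβ : m ≤ τ β) {l h : ℕ} (hl : 1 ≤ l) (hh : 1 ≤ h) (w : Fin l → CircleDeg1Liftˣ)
    {c : Fin l → ℤ} (hc : ∀ i, 0 ≤ c i) (u v : Fin h → CircleDeg1Liftˣ)
    (heq : (List.ofFn fun i => ⁅u i, v i⁆).prod =
      (List.ofFn fun i => (w i * β * (w i)⁻¹) ^ c i).prod) :
    (∑ i, c i) * m ≤ 2 * (h : ℤ) - 2 + l := by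
  have hlower := le_translationNumber_prod_conj_zpow β hβ hl w hc
  rw [← heq] at hlower
  have : (∑ i, c i) * m - ((l : ℤ) - 1) ≤ 2 * h - 1 := by
    exact_mod_cast hlower.trans (translationNumber_prod_commutatorElement_le hh u v)
  linarith

theorem sum_abs_mul_le_of_prod_commutatorElement_eq (β : CircleDeg1Liftˣ) {m : ℤ}
    (hβ : m ≤ τ β) {l h : ℕ} (hl : 1 ≤ l) (hh : 1 ≤ h) (w : Fin l → CircleDeg1Liftˣ)
    {c : Fin l → ℤ} (hc : (∀ i, 0 < c i) ∨ (∀ i, c i < 0)) (u v : Fin h → CircleDeg1Liftˣ)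
    (heq : (List.ofFn fun i => ⁅u i, v i⁆).prod =
      (List.ofFn fun i => (w i * β * (w i)⁻¹) ^ c i).prod) :
    (∑ i, |c i|) * m ≤ 2 * (h : ℤ) - 2 + l := by
  rcases hc with hpos | hneg
  · simpa only [abs_of_pos (hpos _)] using
      sum_mul_le_of_prod_commutatorElement_eq_of_nonneg β hβ hl hh w (fun i => (hpos i).le) u v heq
  · have heq' : (List.ofFn fun i => ⁅v i.rev, u i.rev⁆).prod =
        (List.ofFn fun i => (w i.rev * β * (w i.rev)⁻¹) ^ (-c i.rev)).prod := by
      simpa only [List.inv_prod_ofFn, commutatorElement_inv, zpow_neg] using congrArg (·⁻¹) heq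
    have hsum : ∑ i : Fin l, -c i.rev = ∑ i, |c i| :=
      Fintype.sum_equiv Fin.revPerm _ _ fun i => by simp [abs_of_neg (hneg _)]
    rw [← hsum]
    exact sum_mul_le_of_prod_commutatorElement_eq_of_nonneg β hβ hl hh (fun i => w i.rev)
      (fun i => neg_nonneg.mpr (hneg i.rev).le) (fun i => v i.rev) (fun i => u i.rev) heq'

noncomputable def fractRpow (t : ℝ) (ht : 0 < t) : CircleDeg1Lift where
  toFun x := ⌊x⌋ + Int.fract x ^ t
  monotone' x y hxy := by
    rcases (Int.floor_mono hxy).eq_or_lt with hfl | hfl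
    · have hfract : Int.fract x ≤ Int.fract y := by
        rw [Int.fract, Int.fract, hfl]
        linarith
      simp only [hfl]
      gcongr
    · have hx : Int.fract x ^ t < 1 :=
        Real.rpow_lt_one (Int.fract_nonneg x) (Int.fract_lt_one x) ht
      have hy : 0 ≤ Int.fract y ^ t := Real.rpow_nonneg (Int.fract_nonneg y) t
      have : (⌊x⌋ : ℝ) + 1 ≤ ⌊y⌋ := by exact_mod_cast hfl
      linarith
  map_add_one' x := by
    simp only [Int.floor_add_one, Int.fract_add_one]
    push_cast
    ring

theorem fractRpow_apply_of_mem_Ico {t : ℝ} (ht : 0 < t) {x : ℝ} (hx : x ∈ Set.Ico 0 1) :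
    fractRpow t ht x = x ^ t := by
  change (⌊x⌋ : ℝ) + Int.fract x ^ t = x ^ t
  rw [Int.floor_eq_zero_iff.mpr hx, Int.fract_eq_self.mpr hx]
  simp

theorem fractRpow_mul_fractRpow {s t : ℝ} (hs : 0 < s) (ht : 0 < t) (hst : s * t = 1) :
    fractRpow t ht * fractRpow s hs = 1 := by
  ext x
  have hmem : Int.fract x ^ s ∈ Set.Ico (0 : ℝ) 1 :=
    ⟨Real.rpow_nonneg (Int.fract_nonneg x) s,
      Real.rpow_lt_one (Int.fract_nonneg x) (Int.fract_lt_one x) hs⟩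
  change fractRpow t ht ((⌊x⌋ : ℝ) + Int.fract x ^ s) = x
  rw [add_comm, map_add_int, fractRpow_apply_of_mem_Ico ht hmem,
    ← Real.rpow_mul (Int.fract_nonneg x), hst, Real.rpow_one, add_comm, Int.floor_add_fract]

theorem exists_units_apply_zero_and_apply_eq_one_sub {ε : ℝ} (hε₀ : 0 < ε) (hε₁ : ε < 1) :
    ∃ φ : CircleDeg1Liftˣ, φ 0 = 0 ∧ φ ε = 1 - ε := by
  have hlogε : Real.log ε < 0 := Real.log_neg hε₀ hε₁
  -- the exponent with `ε ^ t = 1 - ε`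
  set t := Real.log (1 - ε) / Real.log ε
  have ht : 0 < t := div_pos_of_neg_of_neg (Real.log_neg (by linarith) (by linarith)) hlogε
  have htinv : 0 < t⁻¹ := inv_pos.mpr ht
  refine ⟨⟨fractRpow t ht, fractRpow t⁻¹ htinv,
    fractRpow_mul_fractRpow htinv ht (inv_mul_cancel₀ ht.ne'),
    fractRpow_mul_fractRpow ht htinv (mul_inv_cancel₀ ht.ne')⟩, ?_, ?_⟩
  · change fractRpow t ht 0 = 0
    rw [fractRpow_apply_of_mem_Ico ht ⟨le_rfl, one_pos⟩, Real.zero_rpow ht.ne']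
  · change fractRpow t ht ε = 1 - ε
    rw [fractRpow_apply_of_mem_Ico ht ⟨hε₀.le, hε₁⟩, Real.rpow_def_of_pos hε₀,
      mul_div_cancel₀ _ hlogε.ne, Real.exp_log (by linarith)]

theorem commutatorElement_apply_mul_apply (a b : CircleDeg1Liftˣ) (x : ℝ) :
    (⁅a, b⁆ : CircleDeg1Liftˣ) ((b * a : CircleDeg1Liftˣ) x) = (a * b : CircleDeg1Liftˣ) x := by
  rw [← mul_apply, ← Units.val_mul, commutatorElement_def]
  group

theorem commutatorElement_translate_mul_apply {φ : CircleDeg1Liftˣ} {ε : ℝ} (h₀ : φ 0 = 0)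
    (hε : φ ε = 1 - ε) :
    (⁅translate (.ofAdd (-ε)) * φ, translate (.ofAdd ε) * φ⁻¹⁆ : CircleDeg1Liftˣ) (2 * ε - 1) =
      2 * ε - 1 + (2 - 4 * ε) := by
  have hinv₀ : (φ⁻¹ : CircleDeg1Liftˣ) 0 = 0 := by
    simpa [h₀] using units_inv_apply_apply φ 0
  have hinv : (φ⁻¹ : CircleDeg1Liftˣ) (-ε) = ε - 1 := by
    have := map_add_int (φ⁻¹ : CircleDeg1Liftˣ) (1 - ε) (-1)
    rw [← hε, units_inv_apply_apply] at this
    push_cast at this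
    rw [show -ε = φ ε + -1 by linarith, this]
    ring
  have key := commutatorElement_apply_mul_apply (translate (.ofAdd (-ε)) * φ)
    (translate (.ofAdd ε) * φ⁻¹) 0
  simp only [Units.val_mul, mul_apply, translate_apply, h₀, hinv₀, hinv, add_zero] at key
  rw [show 2 * ε - 1 = ε + (ε - 1) by ring, key, hε]
  ring

theorem prod_ofFn_conj_translate_apply {K : CircleDeg1Liftˣ} {y c : ℝ} (hK : K y = y + c)
    (n : ℕ) :
    ((List.ofFn fun i : Fin n => translate (.ofAdd (i.rev * c)) * K *
      (translate (.ofAdd (i.rev * c)))⁻¹).prod : CircleDeg1Liftˣ) y = y + n * c := by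
  induction n with
  | zero => simp
  | succ n ih =>
    simp only [List.ofFn_succ, List.prod_cons, Fin.rev_succ, Fin.val_castSucc, Units.val_mul,
      mul_apply, ih, Fin.rev_zero, Fin.val_last, translate_apply, translate_inv_apply]
    rw [show -(n * c) + (y + n * c) = y by ring, hK]
    push_cast
    ring

theorem exists_le_translationNumber_prod_commutatorElement (g : ℕ) :
    ∃ a b : Fin g → CircleDeg1Liftˣ,
      ((2 * g - 1 : ℤ) : ℝ) ≤ τ ((List.ofFn fun i => ⁅a i, b i⁆).prod : CircleDeg1Liftˣ) := by
  rcases g.eq_zero_or_pos with rfl | hg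
  · exact ⟨1, 1, by simp⟩
  -- each handle moves a point by `2 - 4ε`, and `g` of them chained move it by `2g - 1`
  set ε : ℝ := 1 / (4 * g)
  have hg₁ : (1 : ℝ) ≤ g := by exact_mod_cast hg
  obtain ⟨φ, h₀, hε⟩ := exists_units_apply_zero_and_apply_eq_one_sub (ε := ε) (by positivity)
    (by rw [div_lt_one (by positivity)]; linarith)
  set T : Fin g → CircleDeg1Liftˣ := fun i => translate (.ofAdd (i.rev * (2 - 4 * ε)))
  refine ⟨fun i => T i * (translate (.ofAdd (-ε)) * φ) * (T i)⁻¹,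
    fun i => T i * (translate (.ofAdd ε) * φ⁻¹) * (T i)⁻¹, le_of_eq ?_⟩
  refine (translationNumber_of_eq_add_int (x := 2 * ε - 1) _ ?_).symm
  have hconj (a b t : CircleDeg1Liftˣ) : ⁅t * a * t⁻¹, t * b * t⁻¹⁆ = t * ⁅a, b⁆ * t⁻¹ := by
    simp only [← MulAut.conj_apply, map_commutatorElement]
  simp only [hconj]
  rw [prod_ofFn_conj_translate_apply (commutatorElement_translate_mul_apply h₀ hε)]
  have hgε : (g : ℝ) * ε = 1 / 4 := by
    simp only [ε]
    field_simp
  push_cast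
  linear_combination (-4) * hgε

end CircleDeg1Lift

namespace SurfaceEq

theorem necessary_condition_general (g l h : ℕ) (hl : 1 ≤ l) (hh : 1 ≤ h)
    (w : Fin l → Fg g) (c : Fin l → ℤ)
    (hc : (∀ i, 0 < c i) ∨ (∀ i, c i < 0))
    (u v : Fin h → Fg g)
    (heq : (List.ofFn fun i => ⁅u i, v i⁆).prod =
      (List.ofFn fun i : Fin l => (w i * Bg g * (w i)⁻¹) ^ c i).prod) :
    (∑ i, |c i|) * (2 * (g : ℤ) - 1) ≤ 2 * (h : ℤ) - 2 + (l : ℤ) := by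
  obtain ⟨a, b, hab⟩ := CircleDeg1Lift.exists_le_translationNumber_prod_commutatorElement g
  set ρ : Fg g →* CircleDeg1Liftˣ := FreeGroup.lift (Sum.elim a b)
  have hρB : ρ (Bg g) = (List.ofFn fun i => ⁅a i, b i⁆).prod := by
    simp [ρ, Bg, xg, yg, map_list_prod, List.map_ofFn, Function.comp_def, map_commutatorElement]
  have hρ := congrArg ρ heq
  simp only [map_list_prod, List.map_ofFn, Function.comp_def, map_commutatorElement, map_zpow,
    map_mul, map_inv] at hρ
  exact CircleDeg1Lift.sum_abs_mul_le_of_prod_commutatorElement_eq (ρ (Bg g)) (hρB ▸ hab) hl hh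
    _ hc _ _ hρ

/-- Let `g, l, h ≥ 1`, let `w₁,…,w_l` be pairwise distinct elements of `F_{2g}` and
`c₁,…,c_l` nonzero integers that are all positive or all negative. If
`[u₁,v₁]⋯[u_h,v_h] = (B_g^{w₁})^{c₁}⋯(B_g^{w_l})^{c_l}` has a solution in `F_{2g}`, then
`(|c₁|+⋯+|c_l|)(2g−1) ≤ 2h−2+l`. -/
theorem necessary_condition (g l h : ℕ) (hg : 1 ≤ g) (hl : 1 ≤ l) (hh : 1 ≤ h)
    (w : Fin l → Fg g) (hw : Function.Injective w) (c : Fin l → ℤ)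
    (hc : (∀ i, 0 < c i) ∨ (∀ i, c i < 0))
    (u v : Fin h → Fg g)
    (heq : (List.ofFn fun i => ⁅u i, v i⁆).prod =
      (List.ofFn fun i : Fin l => (w i * Bg g * (w i)⁻¹) ^ c i).prod) :
    (∑ i, |c i|) * (2 * (g : ℤ) - 1) ≤ 2 * (h : ℤ) - 2 + (l : ℤ) :=
  necessary_condition_general g l h hl hh w c hc u v heq

end SurfaceEq
end

section
/- Let g ≥ 1, l ≥ 1 and h ≥ 1 be integers, let w₁, …, w_l ∈ F_{2g} and let c₁, …, c_l be integers with c₁ + c₂ + ⋯ + c_l ≠ 0. Let p : F_{2g} → π₁(S_g) = F_{2g}/⟨⟨B_g⟩⟩ be the natural quotient homomorphism. If u₁, v₁, …, u_h, v_h ∈ F_{2g} satisfy [u₁,v₁]⋯[u_h,v_h] = (B_g^{w₁})^{c₁} (B_g^{w₂})^{c₂} ⋯ (B_g^{w_l})^{c_l}, then the subgroup p(⟨u₁, v₁, …, u_h, v_h⟩) has finite index in π₁(S_g), and this index is at most l. -/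
/-!
Let `H = p(⟨u₁, v₁, …, u_h, v_h⟩)` and `Q = π₁(S_g) ⧸ H`. A Fox derivative `∂/∂s`, with
coefficients pushed from `ℤ[π₁(S_g)]` to `ℤ[Q]` by `x ↦ x⁻¹H`, is a crossed homomorphism
that becomes an honest homomorphism on `p⁻¹(H)`. It therefore kills the product of
commutators, while on the right-hand side it gives `∑ cᵢ • wᵢ ∂B_g/∂s`. Reading off the
explicit Fox derivatives of `B_g`, this says that the chain `a = ∑ cᵢ [wᵢ⁻¹H] ∈ ℤ[Q]` is
fixed by every generator of `π₁(S_g)`, so `a` is constant on the transitive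
`π₁(S_g)`-set `Q`. Its total mass `∑ cᵢ` is nonzero, so `a` vanishes nowhere: `Q` is
finite and covered by the `l` cosets `wᵢ⁻¹H`.
-/
namespace SurfaceEq

open scoped commutatorElement

/-- The surface group `π₁(S_g) = F_{2g}/⟨⟨B_g⟩⟩`. -/
abbrev SurfaceGroup (g : ℕ) : Type :=
  Fg g ⧸ Subgroup.normalClosure ({Bg g} : Set (Fg g))

/-- The natural projection `p : F_{2g} → π₁(S_g)`. -/
def pg (g : ℕ) : Fg g →* SurfaceGroup g :=
  QuotientGroup.mk' (Subgroup.normalClosure ({Bg g} : Set (Fg g)))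

section CrossedHom

variable {F G M : Type*} [Group F] [Group G] [AddCommGroup M] [DistribMulAction G M]

def IsCrossedHom (φ : F →* G) (d : F → M) : Prop := ∀ u v, d (u * v) = d u + φ u • d v

namespace IsCrossedHom

variable {φ : F →* G} {d : F → M} (hd : IsCrossedHom φ d)
include hd

theorem map_one : d 1 = 0 := by
  simpa using hd 1 1

theorem map_inv (u : F) : d u⁻¹ = -(φ u⁻¹ • d u) := by
  have := hd u⁻¹ u
  rw [inv_mul_cancel, hd.map_one] at this
  exact eq_neg_of_add_eq_zero_left this.symm

theorem map_commutatorElement (u v : F) :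
    d ⁅u, v⁆ = d u + φ u • d v - φ (u * v * u⁻¹) • d u - φ ⁅u, v⁆ • d v := by
  rw [commutatorElement_def, hd, hd, hd, hd.map_inv, hd.map_inv, smul_neg, smul_neg, ← mul_smul,
    ← mul_smul, ← map_mul, ← map_mul]
  abel

theorem map_conj_of_map_eq_one {z : F} (hz : φ z = 1) (w : F) :
    d (w * z * w⁻¹) = φ w • d z := by
  rw [hd, hd, hd.map_inv, map_mul, hz, mul_one, smul_neg, ← mul_smul, ← map_mul, mul_inv_cancel,
    _root_.map_one, one_smul]
  abel

theorem map_prod_ofFn {n : ℕ} (f : Fin n → F) :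
    d (List.ofFn f).prod = ∑ k : Fin n, φ ((List.ofFn f).take k).prod • d (f k) := by
  induction n with
  | zero => simpa using hd.map_one
  | succ n ih =>
    rw [List.ofFn_succ, List.prod_cons, hd, ih, Fin.sum_univ_succ, Finset.smul_sum]
    simp [mul_smul]

theorem map_prod_ofFn_of_forall_ne {n : ℕ} (f : Fin n → F) (j : Fin n)
    (hf : ∀ k, k ≠ j → d (f k) = 0) :
    d (List.ofFn f).prod = φ ((List.ofFn f).take j).prod • d (f j) := by
  rw [hd.map_prod_ofFn, Finset.sum_eq_single j (fun k _ hk => by rw [hf k hk, smul_zero])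
    (by simp)]

section Restrict

variable {N : Type*} [AddCommGroup N] {H : Subgroup G} {κ : M →+ N}
  (hκ : ∀ h ∈ H, ∀ m, κ (h • m) = κ m)
include hκ

theorem map_mul_of_mem {u : F} (hu : φ u ∈ H) (v : F) : κ (d (u * v)) = κ (d u) + κ (d v) := by
  rw [hd, map_add, hκ _ hu]

theorem map_inv_of_mem {u : F} (hu : φ u ∈ H) : κ (d u⁻¹) = -κ (d u) := by
  rw [hd.map_inv, map_neg, hκ _ (by simpa using inv_mem hu)]

theorem map_zpow_of_mem {u : F} (hu : φ u ∈ H) (c : ℤ) : κ (d (u ^ c)) = c • κ (d u) := by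
  induction c using Int.induction_on with
  | zero => simp [hd.map_one]
  | succ n ih =>
    rw [zpow_add_one, hd.map_mul_of_mem hκ (by simpa using zpow_mem hu n), ih, add_smul, one_smul]
  | pred n ih =>
    rw [zpow_sub_one, hd.map_mul_of_mem hκ (by simpa using zpow_mem hu (-n)), ih,
      hd.map_inv_of_mem hκ hu, sub_smul, one_smul, sub_eq_add_neg]

theorem map_commutatorElement_of_mem {u v : F} (hu : φ u ∈ H) (hv : φ v ∈ H) :
    κ (d ⁅u, v⁆) = 0 := by
  have huv : φ (u * v) ∈ H := by simpa using mul_mem hu hv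
  have huvu : φ (u * v * u⁻¹) ∈ H := by simpa using mul_mem huv (inv_mem hu)
  rw [commutatorElement_def, hd.map_mul_of_mem hκ huvu, hd.map_mul_of_mem hκ huv,
    hd.map_mul_of_mem hκ hu, hd.map_inv_of_mem hκ hu, hd.map_inv_of_mem hκ hv]
  abel

theorem map_prod_ofFn_of_mem {n : ℕ} (f : Fin n → F) (hf : ∀ k, φ (f k) ∈ H) :
    κ (d (List.ofFn f).prod) = ∑ k, κ (d (f k)) := by
  rw [hd.map_prod_ofFn, map_sum]
  refine Finset.sum_congr rfl fun k _ => hκ _ ?_ _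
  rw [map_list_prod]
  refine H.list_prod_mem fun x hx => ?_
  obtain ⟨y, hy, rfl⟩ := List.mem_map.mp hx
  obtain ⟨i, rfl⟩ := List.mem_ofFn.mp (List.mem_of_mem_take hy)
  exact hf i

end Restrict

end IsCrossedHom

variable {S : Type*}

/-- A crossed homomorphism `F → M` over `φ` is the same as a homomorphism `F → M ⋊ G` lifting
`φ`, which on a free group may be prescribed freely on the generators. -/
abbrev AffineGroup (G M : Type*) [Group G] [AddCommGroup M] [DistribMulAction G M] : Type _ :=
  Multiplicative M ⋊[(MulAutMultiplicative (G := M)).symm.toMonoidHom.comp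
    (DistribMulAction.toAddAut G M)] G

noncomputable def affineLift (φ : FreeGroup S →* G) (f : S → M) :
    FreeGroup S →* AffineGroup G M :=
  FreeGroup.lift fun s => ⟨.ofAdd (f s), φ (.of s)⟩

theorem right_affineLift (φ : FreeGroup S →* G) (f : S → M) (u : FreeGroup S) :
    (affineLift φ f u).right = φ u := by
  have : SemidirectProduct.rightHom.comp (affineLift φ f) = φ :=
    FreeGroup.ext_hom _ _ fun s => by
      rw [MonoidHom.comp_apply, affineLift, FreeGroup.lift_apply_of]; rfl
  exact DFunLike.congr_fun this u

noncomputable def crossedHomLift (φ : FreeGroup S →* G) (f : S → M) (u : FreeGroup S) : M :=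
  (affineLift φ f u).left.toAdd

theorem isCrossedHom_crossedHomLift (φ : FreeGroup S →* G) (f : S → M) :
    IsCrossedHom φ (crossedHomLift φ f) := fun u v => by
  simp only [crossedHomLift, map_mul, SemidirectProduct.mul_left, right_affineLift]
  rfl

@[simp] theorem crossedHomLift_of (φ : FreeGroup S →* G) (f : S → M) (s : S) :
    crossedHomLift φ f (.of s) = f s := by
  rw [crossedHomLift, affineLift, FreeGroup.lift_apply_of]; rfl

end CrossedHom

section PrefixCommProd

variable {G : Type*} [Group G] {n : ℕ}

def prefixCommProd (x y : Fin n → G) (j : ℕ) : G :=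
  ((List.ofFn fun k => ⁅x k, y k⁆).take j).prod

theorem prefixCommProd_succ (x y : Fin n → G) (j : Fin n) :
    prefixCommProd x y (j + 1) = prefixCommProd x y j * ⁅x j, y j⁆ := by
  rw [prefixCommProd, prefixCommProd, List.prod_take_succ _ _ (by simp)]
  simp

theorem map_prefixCommProd {G' : Type*} [Group G'] (f : G →* G') (x y : Fin n → G) (j : ℕ) :
    f (prefixCommProd x y j) = prefixCommProd (f ∘ x) (f ∘ y) j := by
  simp [prefixCommProd, map_list_prod, List.map_take, List.map_ofFn, Function.comp_def]

theorem commutatorElement_mem {S : Subgroup G} {a b : G} (ha : a ∈ S) (hb : b ∈ S) :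
    ⁅a, b⁆ ∈ S := by
  rw [commutatorElement_def]
  exact S.mul_mem (S.mul_mem (S.mul_mem ha hb) (S.inv_mem ha)) (S.inv_mem hb)

theorem mem_and_mem_of_conj_mem {S : Subgroup G} {P a b : G} (hP : P ∈ S)
    (h₁ : P * (a * b * a⁻¹) * P⁻¹ ∈ S) (h₂ : P * ⁅a, b⁆ * (P * a)⁻¹ ∈ S) : a ∈ S ∧ b ∈ S := by
  have conj_mem {z : G} (hz : P * z * P⁻¹ ∈ S) : z ∈ S :=
    (S.mul_mem_cancel_left hP).mp ((S.mul_mem_cancel_right (S.inv_mem hP)).mp hz)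
  have hab := conj_mem h₁
  have hba : ⁅a, b⁆ * a⁻¹ ∈ S := conj_mem (by convert h₂ using 1; group)
  have hprod : a * b ∈ S := by
    convert S.inv_mem (S.mul_mem (S.inv_mem hab) hba) using 1
    rw [commutatorElement_def]; group
  have ha : a ∈ S := by
    convert S.mul_mem (S.inv_mem hab) hprod using 1
    group
  exact ⟨ha, by simpa using S.mul_mem (S.inv_mem ha) hprod⟩

theorem forall_mem_of_conj_prefixCommProd_mem (S : Subgroup G) (x y : Fin n → G)
    (h : ∀ j : Fin n,
      prefixCommProd x y j * (x j * y j * (x j)⁻¹) * (prefixCommProd x y j)⁻¹ ∈ S ∧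
        prefixCommProd x y j * ⁅x j, y j⁆ * (prefixCommProd x y j * x j)⁻¹ ∈ S)
    (j : Fin n) : x j ∈ S ∧ y j ∈ S := by
  have hP : ∀ m ≤ n, prefixCommProd x y m ∈ S := by
    intro m hm
    induction m with
    | zero => simp [prefixCommProd, S.one_mem]
    | succ m ih =>
      have hPm := ih (by omega)
      obtain ⟨hx, hy⟩ := mem_and_mem_of_conj_mem hPm (h ⟨m, hm⟩).1 (h ⟨m, hm⟩).2
      rw [prefixCommProd_succ x y ⟨m, hm⟩]
      exact S.mul_mem hPm (commutatorElement_mem hx hy)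
  exact mem_and_mem_of_conj_mem (hP j j.is_lt.le) (h j).1 (h j).2

end PrefixCommProd

section CosetSums

attribute [local instance] Finsupp.comapDistribMulAction

variable {Γ : Type*} [Group Γ]

/-- `Γ` acts on `Γ →₀ ℤ` by left translation while `Γ ⧸ H` consists of left cosets `xH`;
the inverse makes this pushforward blind to left translation by `H`. -/
noncomputable def invCosetMap (H : Subgroup Γ) : (Γ →₀ ℤ) →+ (Γ ⧸ H →₀ ℤ) :=
  Finsupp.mapDomain.addMonoidHom fun x => ((x⁻¹ : Γ) : Γ ⧸ H)

noncomputable def formalSum {Q ι : Type*} [Fintype ι] (q : ι → Q) (c : ι → ℤ) : Q →₀ ℤ :=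
  ∑ i, c i • Finsupp.single (q i) 1

theorem invCosetMap_smul_of_mem (H : Subgroup Γ) (h : Γ) (hh : h ∈ H) (m : Γ →₀ ℤ) :
    invCosetMap H (h • m) = invCosetMap H m := by
  simp only [invCosetMap, Finsupp.mapDomain.addMonoidHom_apply, Finsupp.comapSMul_def]
  rw [← Finsupp.mapDomain_comp]
  congr 1
  funext x
  simp [QuotientGroup.mk_mul_of_mem _ (H.inv_mem hh)]

theorem sum_zsmul_invCosetMap_smul_single (H : Subgroup Γ) {ι : Type*} [Fintype ι] (q : ι → Γ)
    (c : ι → ℤ) (α : Γ) :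
    ∑ i, c i • invCosetMap H (q i • Finsupp.single α 1) =
      α⁻¹ • formalSum (fun i => (((q i)⁻¹ : Γ) : Γ ⧸ H)) c := by
  simp [formalSum, invCosetMap, Finset.smul_sum, MulAction.Quotient.smul_mk]

theorem surjective_of_smul_formalSum_eq {Q ι : Type*} [MulAction Γ Q]
    [MulAction.IsPretransitive Γ Q] [Fintype ι] (q : ι → Q) (c : ι → ℤ) (hc : ∑ i, c i ≠ 0)
    (ha : ∀ γ : Γ, γ • formalSum q c = formalSum q c) :
    Function.Surjective q := by
  intro t
  by_contra! ht
  have ha0 : formalSum q c = 0 := by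
    ext t'
    obtain ⟨γ, rfl⟩ := MulAction.exists_smul_eq Γ t t'
    rw [← ha γ, Finsupp.comapSMul_apply, inv_smul_smul]
    simp [formalSum, ht]
  apply hc
  simpa [formalSum] using congrArg (Finsupp.liftAddHom fun _ => AddMonoidHom.id ℤ) ha0

end CosetSums

section Surface

attribute [local instance] Finsupp.comapDistribMulAction

variable {g : ℕ}

noncomputable def foxDeriv (s : Fin g ⊕ Fin g) : Fg g → SurfaceGroup g →₀ ℤ :=
  crossedHomLift (pg g) (Pi.single s (Finsupp.single 1 1))

theorem isCrossedHom_foxDeriv (s : Fin g ⊕ Fin g) : IsCrossedHom (pg g) (foxDeriv s) :=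
  isCrossedHom_crossedHomLift _ _

theorem foxDeriv_of_self (s : Fin g ⊕ Fin g) : foxDeriv s (.of s) = Finsupp.single 1 1 := by
  simp [foxDeriv]

theorem foxDeriv_of_ne {s t : Fin g ⊕ Fin g} (h : t ≠ s) : foxDeriv s (.of t) = 0 := by
  simp [foxDeriv, h]

theorem foxDeriv_commutatorElement_of_ne {s : Fin g ⊕ Fin g} {k : Fin g} (hx : s ≠ .inl k)
    (hy : s ≠ .inr k) : foxDeriv s ⁅xg k, yg k⁆ = 0 := by
  rw [(isCrossedHom_foxDeriv s).map_commutatorElement, xg, yg, foxDeriv_of_ne hx.symm,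
    foxDeriv_of_ne hy.symm]
  simp

theorem foxDeriv_Bg (s : Fin g ⊕ Fin g) (j : Fin g) (hs : s = .inl j ∨ s = .inr j) :
    foxDeriv s (Bg g) = prefixCommProd (pg g ∘ xg) (pg g ∘ yg) j • foxDeriv s ⁅xg j, yg j⁆ := by
  -- not `rw [Bg]`, which would also hit the `Bg g` inside the type `SurfaceGroup g`
  change foxDeriv s (List.ofFn fun k => ⁅xg k, yg k⁆).prod = _
  rw [(isCrossedHom_foxDeriv s).map_prod_ofFn_of_forall_ne _ j, ← map_prefixCommProd]
  · rfl
  intro k hk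
  refine foxDeriv_commutatorElement_of_ne ?_ ?_ <;> rcases hs with rfl | rfl <;> simp [hk.symm]

theorem foxDeriv_inl_Bg (j : Fin g) :
    foxDeriv (.inl j) (Bg g) =
      Finsupp.single (prefixCommProd (pg g ∘ xg) (pg g ∘ yg) j) 1 -
        Finsupp.single (prefixCommProd (pg g ∘ xg) (pg g ∘ yg) j *
          (pg g (xg j) * pg g (yg j) * (pg g (xg j))⁻¹)) 1 := by
  rw [foxDeriv_Bg _ j (.inl rfl), (isCrossedHom_foxDeriv _).map_commutatorElement, xg, yg,
    foxDeriv_of_self, foxDeriv_of_ne (by simp)]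
  simp [smul_sub, Finsupp.comapSMul_single]

theorem foxDeriv_inr_Bg (j : Fin g) :
    foxDeriv (.inr j) (Bg g) =
      Finsupp.single (prefixCommProd (pg g ∘ xg) (pg g ∘ yg) j * pg g (xg j)) 1 -
        Finsupp.single
          (prefixCommProd (pg g ∘ xg) (pg g ∘ yg) j * ⁅pg g (xg j), pg g (yg j)⁆) 1 := by
  rw [foxDeriv_Bg _ j (.inr rfl), (isCrossedHom_foxDeriv _).map_commutatorElement, xg, yg,
    foxDeriv_of_self, foxDeriv_of_ne (by simp)]
  simp [smul_sub, Finsupp.comapSMul_single]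

theorem pg_Bg : pg g (Bg g) = 1 :=
  (QuotientGroup.eq_one_iff _).mpr (Subgroup.subset_normalClosure rfl)

theorem sum_zsmul_invCosetMap_foxDeriv_Bg {l h : ℕ} {H : Subgroup (SurfaceGroup g)}
    {w : Fin l → Fg g} {c : Fin l → ℤ} {u v : Fin h → Fg g}
    (hu : ∀ i, pg g (u i) ∈ H) (hv : ∀ i, pg g (v i) ∈ H)
    (heq : (List.ofFn fun i => ⁅u i, v i⁆).prod =
      (List.ofFn fun i : Fin l => (w i * Bg g * (w i)⁻¹) ^ c i).prod) (s : Fin g ⊕ Fin g) :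
    ∑ i, c i • invCosetMap H (pg g (w i) • foxDeriv s (Bg g)) = 0 := by
  have hd := isCrossedHom_foxDeriv s
  have hκ := invCosetMap_smul_of_mem H
  have hconj (i : Fin l) : pg g (w i * Bg g * (w i)⁻¹) = 1 := by simp [pg_Bg]
  have := congrArg (fun z => invCosetMap H (foxDeriv s z)) heq
  rw [hd.map_prod_ofFn_of_mem hκ _ fun i => by simpa using commutatorElement_mem (hu i) (hv i),
    hd.map_prod_ofFn_of_mem hκ _ fun i => by
      rw [map_zpow, hconj, one_zpow]; exact H.one_mem] at this
  simp only [hd.map_commutatorElement_of_mem hκ (hu _) (hv _), Finset.sum_const_zero,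
    hd.map_zpow_of_mem hκ ((hconj _).symm ▸ H.one_mem), hd.map_conj_of_map_eq_one pg_Bg] at this
  exact this.symm

theorem eq_top_of_forall_generator_mem (S : Subgroup (SurfaceGroup g))
    (h : ∀ j, pg g (xg j) ∈ S ∧ pg g (yg j) ∈ S) : S = ⊤ := by
  have hle : Subgroup.closure (Set.range FreeGroup.of) ≤ S.comap (pg g) := by
    rw [Subgroup.closure_le]
    rintro _ ⟨j | j, rfl⟩
    exacts [(h j).1, (h j).2]
  rw [FreeGroup.closure_range_of] at hle
  refine eq_top_iff.mpr fun γ _ => ?_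
  obtain ⟨z, rfl⟩ := QuotientGroup.mk'_surjective _ γ
  exact hle (Subgroup.mem_top z)

theorem smul_formalSum_eq_self {l h : ℕ} {H : Subgroup (SurfaceGroup g)}
    {w : Fin l → Fg g} {c : Fin l → ℤ} {u v : Fin h → Fg g}
    (hu : ∀ i, pg g (u i) ∈ H) (hv : ∀ i, pg g (v i) ∈ H)
    (heq : (List.ofFn fun i => ⁅u i, v i⁆).prod =
      (List.ofFn fun i : Fin l => (w i * Bg g * (w i)⁻¹) ^ c i).prod) (γ : SurfaceGroup g) :
    γ • formalSum (fun i => (((pg g (w i))⁻¹ : SurfaceGroup g) : SurfaceGroup g ⧸ H)) c =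
      formalSum (fun i => (((pg g (w i))⁻¹ : SurfaceGroup g) : SurfaceGroup g ⧸ H)) c := by
  set a := formalSum (fun i => (((pg g (w i))⁻¹ : SurfaceGroup g) : SurfaceGroup g ⧸ H)) c
  have key (s : Fin g ⊕ Fin g) (α β : SurfaceGroup g)
      (hs : foxDeriv s (Bg g) = Finsupp.single α 1 - Finsupp.single β 1) :
      β * α⁻¹ ∈ MulAction.stabilizer (SurfaceGroup g) a := by
    have := sum_zsmul_invCosetMap_foxDeriv_Bg hu hv heq s
    simp only [hs, smul_sub, map_sub, Finset.sum_sub_distrib, sum_zsmul_invCosetMap_smul_single,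
      sub_eq_zero] at this
    rw [MulAction.mem_stabilizer_iff, mul_smul, show α⁻¹ • a = β⁻¹ • a from this, smul_inv_smul]
  have htop := eq_top_of_forall_generator_mem _ <|
    forall_mem_of_conj_prefixCommProd_mem _ (pg g ∘ xg) (pg g ∘ yg) fun j =>
      ⟨key _ _ _ (foxDeriv_inl_Bg j), key _ _ _ (foxDeriv_inr_Bg j)⟩
  exact MulAction.mem_stabilizer_iff.mp (htop ▸ Subgroup.mem_top γ)

end Surface

theorem index_le_l_general (g l h : ℕ)
    (w : Fin l → Fg g) (c : Fin l → ℤ) (hc : (∑ i, c i) ≠ 0)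
    (u v : Fin h → Fg g)
    (heq : (List.ofFn fun i => ⁅u i, v i⁆).prod =
      (List.ofFn fun i : Fin l => (w i * Bg g * (w i)⁻¹) ^ c i).prod) :
    (Subgroup.map (pg g) (Subgroup.closure (Set.range u ∪ Set.range v))).FiniteIndex ∧
    (Subgroup.map (pg g) (Subgroup.closure (Set.range u ∪ Set.range v))).index ≤ l := by
  set H := Subgroup.map (pg g) (Subgroup.closure (Set.range u ∪ Set.range v))
  have hu (i : Fin h) : pg g (u i) ∈ H :=
    Subgroup.mem_map_of_mem _ (Subgroup.subset_closure (.inl ⟨i, rfl⟩))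
  have hv (i : Fin h) : pg g (v i) ∈ H :=
    Subgroup.mem_map_of_mem _ (Subgroup.subset_closure (.inr ⟨i, rfl⟩))
  have hsurj : Function.Surjective
      fun i => (((pg g (w i))⁻¹ : SurfaceGroup g) : SurfaceGroup g ⧸ H) :=
    surjective_of_smul_formalSum_eq _ c hc (smul_formalSum_eq_self hu hv heq)
  have : Finite (SurfaceGroup g ⧸ H) := Finite.of_surjective _ hsurj
  exact ⟨Subgroup.finiteIndex_of_finite_quotient,
    (Nat.card_le_card_of_surjective _ hsurj).trans_eq (Nat.card_fin l)⟩

/-- Let `g, l, h ≥ 1`, `w₁,…,w_l ∈ F_{2g}` and `c₁,…,c_l` integers with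
`c₁+⋯+c_l ≠ 0`. If `u₁,v₁,…,u_h,v_h ∈ F_{2g}` satisfy
`[u₁,v₁]⋯[u_h,v_h] = (B_g^{w₁})^{c₁}⋯(B_g^{w_l})^{c_l}`, then
`p(⟨u₁,v₁,…,u_h,v_h⟩)` has finite index in `π₁(S_g)` and this index is at most `l`. -/
theorem index_le_l (g l h : ℕ) (hg : 1 ≤ g) (hl : 1 ≤ l) (hh : 1 ≤ h)
    (w : Fin l → Fg g) (c : Fin l → ℤ) (hc : (∑ i, c i) ≠ 0)
    (u v : Fin h → Fg g)
    (heq : (List.ofFn fun i => ⁅u i, v i⁆).prod =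
      (List.ofFn fun i : Fin l => (w i * Bg g * (w i)⁻¹) ^ c i).prod) :
    (Subgroup.map (pg g) (Subgroup.closure (Set.range u ∪ Set.range v))).FiniteIndex ∧
    (Subgroup.map (pg g) (Subgroup.closure (Set.range u ∪ Set.range v))).index ≤ l :=
  index_le_l_general g l h w c hc u v heq

end SurfaceEq
end

section
/- Let l, c, g ≥ 1 be integers, and for an integer e ≥ 1 let h(e) denote the minimal integer satisfying h(e) ≥ l(e(2g−1)−1)/2 + 1; in particular h(1) = l(g−1) + 1. Let w₁, …, w_l ∈ F_{2g} and let p : F_{2g} → π₁(S_g) = F_{2g}/⟨⟨B_g⟩⟩ be the natural quotient homomorphism. Suppose there exist a₁, b₁, …, a_{h(1)}, b_{h(1)} ∈ F_{2g} with [a₁,b₁]⋯[a_{h(1)},b_{h(1)}] = B_g^{w₁} B_g^{w₂} ⋯ B_g^{w_l}, and let H₁ = ⟨a₁, b₁, …, a_{h(1)}, b_{h(1)}⟩. Then for every integer c ≥ 1 there exist u₁, v₁, …, u_{h(c)}, v_{h(c)} ∈ F_{2g} with [u₁,v₁]⋯[u_{h(c)},v_{h(c)}] = (B_g^{w₁})^c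 (B_g^{w₂})^c ⋯ (B_g^{w_l})^c such that the subgroup H₂ = ⟨u₁, v₁, …, u_{h(c)}, v_{h(c)}⟩ satisfies p(H₁) = p(H₂). -/
namespace SurfaceEq

open scoped commutatorElement

/-!
Put `N = ker p`, `S = H₁ ⊔ N`, and let `T` be the set of commutators of elements of `S`. Every
relator `C_i = w_i B_g w_i⁻¹` lies in `N ≤ S`, and
`P := C_1 ⋯ C_l = [a_1, b_1] ⋯ [a_{h(1)}, b_{h(1)}]`.
It suffices to write `C_1^c ⋯ C_l^c = z P` with `z ∈ T ^ (h(c) - h(1))`: spelling out `z` and `P`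
gives `u, v` with values in `S` among which every `a_j, b_j` occurs, so `H₂ ⊔ N = H₁ ⊔ N`.

For `l ≥ 2` three moves do this. `x^c y^c` is a product of `c` conjugates of `x y` by elements of
`S`, the last one trivial; two such products, for `P` and for `Q`, combine into `c - 1` commutators
times such a product for `P Q`; and `x^c y^c ((x y)^c)⁻¹ ∈ T ^ ⌊c/2⌋`. Pairing up the relators
gives `z` as an element of `T ^ ⌊((l - 2)(c - 1) + 1)/2⌋` times `c - 1` nontrivial conjugates of
`P`, each in `T ^ h(1)`.

For `l = 1` one splits `P = Q [x, y]` instead: `(Q [x, y])^c` is `c` conjugates of `Q` times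
`[x, y]^c`, and by Culler's identity `[x, y]^c` is a product of `⌊c/2⌋ + 1` commutators ending in
`[x, y^c]`. Now `y` is not among the new generators, but it is recovered modulo `N` from `x`,
`y^c` and the next-to-last commutator.
-/

open scoped Pointwise

section CommutatorProducts

variable {G : Type*} [Group G] (S : Subgroup G)

def commutatorsIn : Set G := Set.image2 (fun x y => ⁅x, y⁆) (S : Set G) S

def conjugatesIn (P : G) : Set G := (fun s => s * P * s⁻¹) '' (S : Set G)

variable {S}

lemma mem_mul_singleton_iff {s : Set G} {a b : G} : a ∈ s * {b} ↔ a * b⁻¹ ∈ s := by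
  rw [Set.mul_singleton]
  exact ⟨by rintro ⟨x, hx, rfl⟩; simpa using hx, fun h => ⟨_, h, by simp⟩⟩

lemma commutatorElement_mem_s3 {K : Subgroup G} {g h : G} (hg : g ∈ K) (hh : h ∈ K) : ⁅g, h⁆ ∈ K := by
  rw [commutatorElement_def]
  exact K.mul_mem (K.mul_mem (K.mul_mem hg hh) (K.inv_mem hg)) (K.inv_mem hh)

lemma one_mem_commutatorsIn : (1 : G) ∈ commutatorsIn S :=
  ⟨1, S.one_mem, 1, S.one_mem, commutatorElement_one_left 1⟩

lemma commutatorsIn_subset : commutatorsIn S ⊆ (S : Set G) := by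
  rintro _ ⟨x, hx, y, hy, rfl⟩
  exact commutatorElement_mem_s3 hx hy

lemma commutatorsIn_pow_subset (n : ℕ) : commutatorsIn S ^ n ⊆ (S : Set G) :=
  Submonoid.pow_subset (S := S.toSubmonoid) commutatorsIn_subset

lemma conj_mem_commutatorsIn_pow {t z : G} {n : ℕ} (ht : t ∈ S) (hz : z ∈ commutatorsIn S ^ n) :
    t * z * t⁻¹ ∈ commutatorsIn S ^ n := by
  have hconj : MulAut.conj t '' commutatorsIn S ⊆ commutatorsIn S := by
    rintro _ ⟨_, ⟨x, hx, y, hy, rfl⟩, rfl⟩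
    rw [map_commutatorElement]
    exact ⟨_, S.mul_mem (S.mul_mem ht hx) (S.inv_mem ht),
      _, S.mul_mem (S.mul_mem ht hy) (S.inv_mem ht), rfl⟩
  have h := Set.pow_subset_pow_left hconj (n := n)
  rw [← Set.image_pow] at h
  simpa using h ⟨z, hz, rfl⟩

lemma inv_mem_commutatorsIn_pow {z : G} {n : ℕ} (hz : z ∈ commutatorsIn S ^ n) :
    z⁻¹ ∈ commutatorsIn S ^ n := by
  have hinv : (commutatorsIn S)⁻¹ = commutatorsIn S := by
    ext z
    constructor
    · rintro ⟨x, hx, y, hy, h⟩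
      exact ⟨y, hy, x, hx, by rw [← inv_inv z, ← h]; exact (commutatorElement_inv x y).symm⟩
    · rintro ⟨x, hx, y, hy, rfl⟩
      exact ⟨y, hy, x, hx, (commutatorElement_inv x y).symm⟩
  rw [← Set.mem_inv, ← inv_pow, hinv]
  exact hz

lemma conjugatesIn_subset {P : G} (hP : P ∈ S) : conjugatesIn S P ⊆ (S : Set G) := by
  rintro _ ⟨s, hs, rfl⟩
  exact S.mul_mem (S.mul_mem hs hP) (S.inv_mem hs)

lemma conjugatesIn_subset_commutatorsIn_pow {P : G} {k : ℕ} (hP : P ∈ commutatorsIn S ^ k) :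
    conjugatesIn S P ⊆ commutatorsIn S ^ k := by
  rintro _ ⟨s, hs, rfl⟩
  exact conj_mem_commutatorsIn_pow hs hP

lemma ofFn_commutator_prod_mem {m : ℕ} {a b : Fin m → G} (ha : ∀ i, a i ∈ S) (hb : ∀ i, b i ∈ S) :
    (List.ofFn fun i => ⁅a i, b i⁆).prod ∈ commutatorsIn S ^ m :=
  Set.mem_pow.2 ⟨fun i => ⟨_, a i, ha i, b i, hb i, rfl⟩, rfl⟩

lemma mul_pow_mul_inv_pow_mem {Q γ : G} (hQ : Q ∈ S) (hγ : γ ∈ S) (n : ℕ) :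
    (Q * γ) ^ (n + 1) * (γ ^ (n + 1))⁻¹ ∈ conjugatesIn S Q ^ n * {Q} := by
  rw [mem_mul_singleton_iff]
  induction n with
  | zero => simp
  | succ n ih =>
    have key : (Q * γ) ^ (n + 2) * (γ ^ (n + 2))⁻¹ * Q⁻¹ =
        (Q * γ) ^ (n + 1) * (γ ^ (n + 1))⁻¹ * Q⁻¹ *
          (Q * γ ^ (n + 1) * Q * (Q * γ ^ (n + 1))⁻¹) := by
      rw [pow_succ (Q * γ) (n + 1)]
      group
    rw [key, pow_succ]
    exact Set.mul_mem_mul ih ⟨_, S.mul_mem hQ (S.pow_mem hγ _), rfl⟩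

lemma pow_mul_pow_mem {x y : G} (hxy : x * y ∈ S) (hy : y ∈ S) (n : ℕ) :
    x ^ (n + 1) * y ^ (n + 1) ∈ conjugatesIn S (x * y) ^ n * {x * y} := by
  simpa [inv_pow] using mul_pow_mul_inv_pow_mem hxy (S.inv_mem hy) n

-- For `A = x y x⁻¹`, `B = y⁻¹` we have `A B = ⁅x, y⁆` and `A ^ n * B ^ n = ⁅x, y ^ n⁆`: this is
-- the induction step of Culler's identity.
lemma mul_pow_add_two_mul_inv (A B : G) (n : ℕ) :
    (A * B) ^ (n + 2) * (A ^ (n + 2) * B ^ (n + 2))⁻¹ =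
      (A * B) ^ 2 * ((A * B) ^ n * (A ^ n * B ^ n)⁻¹) * ((A * B) ^ 2)⁻¹ *
        ⁅A * B * A * B * A⁻¹, A ^ (n + 1) * B⁻¹ * A⁻¹⁆ := by
  rw [show (A * B) ^ (n + 2) = (A * B) ^ 2 * (A * B) ^ n by rw [← pow_add, add_comm]]
  simp only [commutatorElement_def, pow_add, pow_two, pow_one]
  group

lemma mul_pow_mul_inv_mem {A B : G} (hA : A ∈ S) (hB : B ∈ S) :
    ∀ n : ℕ, (A * B) ^ n * (A ^ n * B ^ n)⁻¹ ∈ commutatorsIn S ^ (n / 2)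
  | 0 => by simp
  | 1 => by simp
  | n + 2 => by
    rw [mul_pow_add_two_mul_inv, show (n + 2) / 2 = n / 2 + 1 by omega, pow_succ]
    refine Set.mul_mem_mul
      (conj_mem_commutatorsIn_pow (S.pow_mem (S.mul_mem hA hB) 2) (mul_pow_mul_inv_mem hA hB n))
      ⟨_, ?_, _, ?_, rfl⟩ <;> aesop

lemma mem_of_mem_conjugatesIn_pow_mul {P X : G} {n : ℕ} (hP : P ∈ S)
    (hX : X ∈ conjugatesIn S P ^ n * {P}) : X ∈ S := by
  rw [mem_mul_singleton_iff] at hX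
  simpa using S.mul_mem (Submonoid.pow_subset (S := S.toSubmonoid) (conjugatesIn_subset hP) hX) hP

lemma mul_mem_commutatorsIn_pow_mul {P Q X Y : G} (hP : P ∈ S) (hQ : Q ∈ S) {n : ℕ}
    (hX : X ∈ conjugatesIn S P ^ n * {P}) (hY : Y ∈ conjugatesIn S Q ^ n * {Q}) :
    X * Y ∈ commutatorsIn S ^ n * (conjugatesIn S (P * Q) ^ n * {P * Q}) := by
  induction n generalizing X Y with
  | zero =>
    simp only [pow_zero, one_mul, Set.mem_singleton_iff] at hX hY ⊢
    rw [hX, hY]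
  | succ n ih =>
    rw [pow_succ', mul_assoc] at hX hY
    obtain ⟨_, ⟨s, hs, rfl⟩, X, hX, rfl⟩ := hX
    obtain ⟨_, ⟨t, ht, rfl⟩, Y, hY, rfl⟩ := hY
    obtain ⟨τ, hτ, W, hW, hτW⟩ := Set.mem_mul.1 (ih hX hY)
    have hXS := mem_of_mem_conjugatesIn_pow_mul hP hX
    set r := s * (P * Q) * s⁻¹
    set γ := s⁻¹ * X * t
    have hr : r ∈ S := by aesop
    rw [pow_succ', pow_succ', mul_assoc (conjugatesIn S (P * Q))]
    -- Carrying `t Q t⁻¹` past `X` costs one commutator: `s P s⁻¹ * (X * t Q t⁻¹ * X⁻¹)` is a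
    -- commutator times `r = s (P Q) s⁻¹`.
    refine Set.mem_mul.2 ⟨⁅s * P * Q⁻¹ * (s * P)⁻¹, s * P * Q * γ * (s * P * Q)⁻¹⁆ * (r * τ * r⁻¹),
      Set.mul_mem_mul ⟨_, by aesop, _, by aesop, rfl⟩ (conj_mem_commutatorsIn_pow hr hτ),
      r * W, Set.mul_mem_mul ⟨s, hs, rfl⟩ hW, ?_⟩
    calc _ = ⁅s * P * Q⁻¹ * (s * P)⁻¹, s * P * Q * γ * (s * P * Q)⁻¹⁆ * r * (τ * W) := by group
      _ = s * P * s⁻¹ * X * (t * Q * t⁻¹ * Y) := by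
        rw [hτW]
        simp only [commutatorElement_def, r, γ]
        group

theorem prod_map_pow_mem (n : ℕ) : ∀ (x y : G) (C : List G), (∀ z ∈ x :: y :: C, z ∈ S) →
    ((x :: y :: C).map (· ^ (n + 1))).prod ∈ commutatorsIn S ^ ((C.length * n + 1) / 2) *
      (conjugatesIn S (x :: y :: C).prod ^ n * {(x :: y :: C).prod})
  | x, y, [], hS => by
    have hxy := pow_mul_pow_mem (S.mul_mem (hS x (by simp)) (hS y (by simp))) (hS y (by simp)) n
    simpa using hxy
  | x, y, [z], hS => by
    have hx : x ∈ S := hS x (by simp)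
    have hy : y ∈ S := hS y (by simp)
    have hz : z ∈ S := hS z (by simp)
    have hxy := inv_mem_commutatorsIn_pow (mul_pow_mul_inv_mem hx hy (n + 1))
    have hxyz := pow_mul_pow_mem (S.mul_mem (S.mul_mem hx hy) hz) hz n
    have hsplit : ([x, y, z].map (· ^ (n + 1))).prod =
        x ^ (n + 1) * y ^ (n + 1) * ((x * y) ^ (n + 1))⁻¹ *
          ((x * y) ^ (n + 1) * z ^ (n + 1)) := by
      simp only [List.map_cons, List.map_nil, List.prod_cons, List.prod_nil]
      group
    rw [hsplit, List.length_singleton, one_mul,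
      show [x, y, z].prod = x * y * z by simp [mul_assoc]]
    exact Set.mul_mem_mul (by simpa using hxy) hxyz
  | x, y, z :: t :: C, hS => by
    have hx : x ∈ S := hS x (by simp)
    have hy : y ∈ S := hS y (by simp)
    have hC : ∀ u ∈ z :: t :: C, u ∈ S := fun u hu => hS u (by simp_all)
    obtain ⟨τ, hτ, W, hW, hτW⟩ := Set.mem_mul.1 (prod_map_pow_mem n z t C hC)
    have hxy := pow_mul_pow_mem (S.mul_mem hx hy) hy n
    obtain ⟨τ', hτ', W', hW', hτW'⟩ := Set.mem_mul.1 (mul_mem_commutatorsIn_pow_mul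
      (S.mul_mem hx hy) (S.list_prod_mem hC) hxy hW)
    have hcost : ((z :: t :: C).length * n + 1) / 2 = (C.length * n + 1) / 2 + n := by
      simp only [List.length_cons, add_mul]
      omega
    rw [hcost, pow_add]
    refine Set.mem_mul.2 ⟨x ^ (n + 1) * y ^ (n + 1) * τ * (x ^ (n + 1) * y ^ (n + 1))⁻¹ * τ',
      Set.mul_mem_mul (conj_mem_commutatorsIn_pow (by aesop) hτ) hτ', W', ?_, ?_⟩
    · simpa only [List.prod_cons, mul_assoc] using hW'
    · rw [mul_assoc _ τ', hτW', List.map_cons, List.map_cons, List.prod_cons, List.prod_cons,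
        ← hτW]
      group

lemma prod_map_pow_mem_mul {x y : G} {C : List G} {h : ℕ} (hS : ∀ z ∈ x :: y :: C, z ∈ S)
    (hP : (x :: y :: C).prod ∈ commutatorsIn S ^ h) (n : ℕ) :
    ((x :: y :: C).map (· ^ (n + 1))).prod ∈
      commutatorsIn S ^ ((C.length * n + 1) / 2 + h * n) * {(x :: y :: C).prod} := by
  obtain ⟨τ, hτ, W, hW, hτW⟩ := Set.mem_mul.1 (prod_map_pow_mem n x y C hS)
  rw [mem_mul_singleton_iff] at hW ⊢
  have hW' := Set.pow_subset_pow_left (conjugatesIn_subset_commutatorsIn_pow hP) hW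
  rw [← pow_mul] at hW'
  rw [← hτW, mul_assoc, pow_add]
  exact Set.mul_mem_mul hτ hW'

/-- The next-to-last commutator in the expression of `⁅x, y⁆ ^ (n + 2)` as `n / 2 + 2`
commutators (`commutator_pow_add_two_mem`); its second entry `V` satisfies
`V * ⁅x, y⁆ = x * y ^ (n + 1) * x⁻¹`. -/
def cullerPair (x y : G) (n : ℕ) : G × G :=
  (⁅x, y⁆ ^ 2 * x * y⁻¹ * x⁻¹, x * y ^ (n + 1) * x⁻¹ * y * x * y⁻¹ * x⁻¹)

lemma cullerPair_mem {x y : G} (hx : x ∈ S) (hy : y ∈ S) (n : ℕ) :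
    (cullerPair x y n).1 ∈ S ∧ (cullerPair x y n).2 ∈ S := by
  have hxy := commutatorElement_mem_s3 hx hy
  constructor <;> repeat' first | assumption | apply S.mul_mem | apply S.inv_mem | apply S.pow_mem

lemma commutator_pow_add_two_mem {x y : G} (hx : x ∈ S) (hy : y ∈ S) (n : ℕ) :
    ⁅x, y⁆ ^ (n + 2) ∈ commutatorsIn S ^ (n / 2) *
      {⁅(cullerPair x y n).1, (cullerPair x y n).2⁆ * ⁅x, y ^ (n + 2)⁆} := by
  have hA : x * y * x⁻¹ ∈ S := S.mul_mem (S.mul_mem hx hy) (S.inv_mem hx)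
  have hD := conj_mem_commutatorsIn_pow (S.pow_mem (S.mul_mem hA (S.inv_mem hy)) 2)
    (mul_pow_mul_inv_mem hA (S.inv_mem hy) n)
  rw [mem_mul_singleton_iff]
  convert hD using 1
  have key := mul_pow_add_two_mul_inv (x * y * x⁻¹) y⁻¹ n
  rw [eq_mul_inv_of_mul_eq key.symm]
  simp only [cullerPair, conj_pow, inv_pow, commutatorElement_def, pow_two]
  group

lemma mul_commutator_pow_add_two_mem {Q x y : G} {m : ℕ} (hQ : Q ∈ commutatorsIn S ^ m)
    (hx : x ∈ S) (hy : y ∈ S) (n : ℕ) :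
    (Q * ⁅x, y⁆) ^ (n + 2) ∈ commutatorsIn S ^ (m * (n + 1) + n / 2) *
      {Q * (⁅(cullerPair x y n).1, (cullerPair x y n).2⁆ * ⁅x, y ^ (n + 2)⁆)} := by
  have hQS : Q ∈ S := commutatorsIn_pow_subset m hQ
  have hγ : ⁅x, y⁆ ∈ S := commutatorElement_mem_s3 hx hy
  have hW := mul_pow_mul_inv_pow_mem hQS hγ (n + 1)
  rw [mem_mul_singleton_iff] at hW
  have hW' := Set.pow_subset_pow_left (conjugatesIn_subset_commutatorsIn_pow hQ) hW
  rw [← pow_mul] at hW'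
  obtain ⟨D, hD, _, rfl, hDc⟩ := Set.mem_mul.1 (commutator_pow_add_two_mem hx hy n)
  rw [pow_add, mem_mul_singleton_iff]
  convert Set.mul_mem_mul hW' (conj_mem_commutatorsIn_pow hQS hD) using 1
  rw [← hDc]
  group

theorem exists_ofFn_commutator_prod_eq {z : G} {k n : ℕ} (hz : z ∈ commutatorsIn S ^ k)
    {L : List (G × G)} (hL : ∀ q ∈ L, q.1 ∈ S ∧ q.2 ∈ S) (hn : k + L.length ≤ n) :
    ∃ u v : Fin n → G,
      (List.ofFn fun i => ⁅u i, v i⁆).prod = z * (L.map fun q => ⁅q.1, q.2⁆).prod ∧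
      Set.range u ∪ Set.range v ⊆ S ∧ ∀ q ∈ L, q.1 ∈ Set.range u ∧ q.2 ∈ Set.range v := by
  obtain ⟨k', rfl⟩ : ∃ k', n = k' + L.length := ⟨n - L.length, by omega⟩
  obtain ⟨f, hf⟩ := Set.mem_pow.1
    (Set.pow_subset_pow_right one_mem_commutatorsIn (by omega : k ≤ k') hz)
  choose x hx y hy hxy using fun i => (f i).2
  refine ⟨Fin.append x fun i => L[(i : ℕ)].1, Fin.append y fun i => L[(i : ℕ)].2, ?_, ?_,
    fun q hq => ?_⟩
  · have hcomm : (fun i => ⁅Fin.append x (fun i : Fin L.length => L[(i : ℕ)].1) i,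
        Fin.append y (fun i : Fin L.length => L[(i : ℕ)].2) i⁆) =
        Fin.append (fun i => (f i : G)) (fun i : Fin L.length => ⁅L[(i : ℕ)].1, L[(i : ℕ)].2⁆) :=
      funext (Fin.addCases (by simp [hxy]) (by simp))
    rw [hcomm, List.ofFn_fin_append, List.prod_append, hf,
      List.ofFn_getElem_eq_map L (fun q => ⁅q.1, q.2⁆)]
  · rintro _ (⟨i, rfl⟩ | ⟨i, rfl⟩) <;> induction i using Fin.addCases <;>
      simp [hx, hy, hL _ (List.getElem_mem _)]
  · obtain ⟨i, hi, rfl⟩ := List.getElem_of_mem hq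
    exact ⟨⟨_, Fin.append_right _ _ ⟨i, hi⟩⟩, ⟨_, Fin.append_right _ _ ⟨i, hi⟩⟩⟩

lemma range_subset_of_commutator_prod_mem {K : Subgroup G} {m n : ℕ} {a b : Fin (m + 1) → G}
    (hK : (List.ofFn fun i => ⁅a i, b i⁆).prod ∈ K) (ha : ∀ i : Fin m, a i.castSucc ∈ K)
    (hb : ∀ i : Fin m, b i.castSucc ∈ K) (hx : a (Fin.last m) ∈ K)
    (hy : b (Fin.last m) ^ (n + 2) ∈ K)
    (hV : (cullerPair (a (Fin.last m)) (b (Fin.last m)) n).2 ∈ K) :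
    Set.range a ∪ Set.range b ⊆ K := by
  set x := a (Fin.last m)
  set y := b (Fin.last m)
  have hQ : (List.ofFn fun i : Fin m => ⁅a i.castSucc, b i.castSucc⁆).prod ∈ K :=
    K.list_prod_mem fun _ hg => by
      obtain ⟨i, rfl⟩ := List.mem_ofFn.1 hg
      exact commutatorElement_mem_s3 (ha i) (hb i)
  have hγ : ⁅x, y⁆ ∈ K := by
    rw [List.ofFn_succ', List.concat_eq_append, List.prod_append] at hK
    simpa using K.mul_mem (K.inv_mem hQ) hK
  have hy' : y ^ (n + 1) ∈ K := by
    have := K.mul_mem (K.mul_mem (K.mul_mem (K.inv_mem hx) hV) hγ) hx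
    simpa [cullerPair, commutatorElement_def, mul_assoc] using this
  have hy : y ∈ K := by
    have := K.mul_mem (K.inv_mem hy') hy
    rwa [pow_succ y (n + 1), inv_mul_cancel_left] at this
  rintro _ (⟨i, rfl⟩ | ⟨i, rfl⟩) <;> induction i using Fin.lastCases
  exacts [hx, ha _, hy, hb _]

lemma closure_sup_eq_closure_sup {N : Subgroup G} {s t : Set G}
    (hs : s ⊆ (Subgroup.closure t ⊔ N : Subgroup G))
    (ht : t ⊆ (Subgroup.closure s ⊔ N : Subgroup G)) :
    Subgroup.closure s ⊔ N = Subgroup.closure t ⊔ N :=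
  le_antisymm (sup_le ((Subgroup.closure_le _).2 hs) le_sup_right)
    (sup_le ((Subgroup.closure_le _).2 ht) le_sup_right)

theorem exists_commutators_eq_pow_of_mem (N : Subgroup G) {m n hc : ℕ} (a b : Fin (m + 1) → G)
    (hN : (List.ofFn fun i => ⁅a i, b i⁆).prod ∈ N) (hhc : (n + 2) * m + (n + 2) / 2 + 1 ≤ hc) :
    ∃ u v : Fin hc → G,
      (List.ofFn fun i => ⁅u i, v i⁆).prod = (List.ofFn fun i => ⁅a i, b i⁆).prod ^ (n + 2) ∧
      Subgroup.closure (Set.range u ∪ Set.range v) ⊔ N =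
        Subgroup.closure (Set.range a ∪ Set.range b) ⊔ N := by
  set S := Subgroup.closure (Set.range a ∪ Set.range b) ⊔ N
  have ha : ∀ i, a i ∈ S := fun i =>
    Subgroup.mem_sup_left (Subgroup.subset_closure (Or.inl ⟨i, rfl⟩))
  have hb : ∀ i, b i ∈ S := fun i =>
    Subgroup.mem_sup_left (Subgroup.subset_closure (Or.inr ⟨i, rfl⟩))
  set x := a (Fin.last m)
  set y := b (Fin.last m)
  set Q := (List.ofFn fun i : Fin m => ⁅a i.castSucc, b i.castSucc⁆).prod
  have hsplit : (List.ofFn fun i => ⁅a i, b i⁆).prod = Q * ⁅x, y⁆ := by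
    rw [List.ofFn_succ', List.concat_eq_append, List.prod_append]
    simp [Q, x, y]
  obtain ⟨z, hz, _, rfl, hzeq⟩ := Set.mem_mul.1 (mul_commutator_pow_add_two_mem
    (ofFn_commutator_prod_mem (a := fun i : Fin m => a i.castSucc) (fun i => ha _)
      (fun i => hb _)) (ha _) (hb _) n)
  set L := (List.ofFn fun i : Fin m => (a i.castSucc, b i.castSucc)) ++
    [cullerPair x y n, (x, y ^ (n + 2))]
  have hL : ∀ q ∈ L, q.1 ∈ S ∧ q.2 ∈ S := by
    simp only [L, List.mem_append, List.mem_ofFn, List.mem_cons, List.not_mem_nil]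
    rintro q (⟨i, rfl⟩ | rfl | rfl | h)
    exacts [⟨ha _, hb _⟩, cullerPair_mem (ha _) (hb _) n, ⟨ha _, S.pow_mem (hb _) _⟩, h.elim]
  have hcount : (n + 2) * m = m * (n + 1) + m := by ring
  obtain ⟨u, v, hprod, huv, hLuv⟩ :=
    exists_ofFn_commutator_prod_eq (n := hc) hz hL (by simp [L]; omega)
  refine ⟨u, v, ?_, closure_sup_eq_closure_sup huv ?_⟩
  · rw [hprod, hsplit, ← hzeq]
    simp [L, x, y, List.map_ofFn, Function.comp_def]
  · set K := Subgroup.closure (Set.range u ∪ Set.range v) ⊔ N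
    have hLK : ∀ q ∈ L, q.1 ∈ K ∧ q.2 ∈ K := fun q hq =>
      ⟨Subgroup.mem_sup_left (Subgroup.subset_closure (Or.inl (hLuv q hq).1)),
        Subgroup.mem_sup_left (Subgroup.subset_closure (Or.inr (hLuv q hq).2))⟩
    refine range_subset_of_commutator_prod_mem (n := n) (Subgroup.mem_sup_right hN)
      (fun i => (hLK (a i.castSucc, b i.castSucc) ?_).1)
      (fun i => (hLK (a i.castSucc, b i.castSucc) ?_).2) (hLK (x, y ^ (n + 2)) ?_).1
      (hLK (x, y ^ (n + 2)) ?_).2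
      (hLK (cullerPair x y n) ?_).2 <;>
      simp only [L, List.mem_append, List.mem_ofFn, List.mem_cons] <;> first
      | exact Or.inl ⟨_, rfl⟩
      | simp

theorem exists_commutators_eq_prod_pow (N : Subgroup G) {l h n hc : ℕ} (C : Fin (l + 2) → G)
    (hC : ∀ i, C i ∈ N) (a b : Fin h → G)
    (hab : (List.ofFn fun i => ⁅a i, b i⁆).prod = (List.ofFn C).prod)
    (hhc : (l * n + 1) / 2 + (n + 1) * h ≤ hc) :
    ∃ u v : Fin hc → G,
      (List.ofFn fun i => ⁅u i, v i⁆).prod = (List.ofFn fun i => C i ^ (n + 1)).prod ∧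
      Subgroup.closure (Set.range u ∪ Set.range v) ⊔ N =
        Subgroup.closure (Set.range a ∪ Set.range b) ⊔ N := by
  set S := Subgroup.closure (Set.range a ∪ Set.range b) ⊔ N
  have ha : ∀ i, a i ∈ S := fun i =>
    Subgroup.mem_sup_left (Subgroup.subset_closure (Or.inl ⟨i, rfl⟩))
  have hb : ∀ i, b i ∈ S := fun i =>
    Subgroup.mem_sup_left (Subgroup.subset_closure (Or.inr ⟨i, rfl⟩))
  have hCS : ∀ z ∈ List.ofFn C, z ∈ S := fun z hz => by
    obtain ⟨i, rfl⟩ := List.mem_ofFn.1 hz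
    exact Subgroup.mem_sup_right (hC i)
  have hP := ofFn_commutator_prod_mem ha hb
  rw [hab] at hP
  obtain ⟨x, y, D, hxyD, hD⟩ : ∃ x y D, List.ofFn C = x :: y :: D ∧ D.length = l :=
    ⟨C 0, C 1, List.ofFn fun i : Fin l => C i.succ.succ, by simp [List.ofFn_succ],
      List.length_ofFn⟩
  rw [hxyD] at hCS hP
  obtain ⟨z, hz, _, rfl, hzP⟩ := Set.mem_mul.1 (prod_map_pow_mem_mul hCS hP n)
  rw [hD] at hz
  have hcount : (n + 1) * h = h * n + h := by ring
  obtain ⟨u, v, hprod, huv, hab'⟩ := exists_ofFn_commutator_prod_eq (n := hc)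
    hz (L := List.ofFn fun i => (a i, b i))
    (by simp [List.mem_ofFn, ha, hb]) (by simp only [List.length_ofFn]; omega)
  refine ⟨u, v, ?_, closure_sup_eq_closure_sup huv ?_⟩
  · have hP' : ((List.ofFn fun i => (a i, b i)).map fun q => ⁅q.1, q.2⁆).prod =
        (x :: y :: D).prod := by
      rw [← hxyD, ← hab, List.map_ofFn]
      rfl
    rw [hprod, hP', hzP, ← hxyD, List.map_ofFn]
    rfl
  · rintro _ (⟨i, rfl⟩ | ⟨i, rfl⟩) <;>
      refine Subgroup.mem_sup_left (Subgroup.subset_closure ?_)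
    · exact Or.inl (hab' (a i, b i) (List.mem_ofFn.2 ⟨i, rfl⟩)).1
    · exact Or.inr (hab' (a i, b i) (List.mem_ofFn.2 ⟨i, rfl⟩)).2

end CommutatorProducts

lemma isLeast_commutator_count (l m : ℕ) :
    IsLeast {n : ℕ | (l : ℚ) * ((1 : ℚ) * (2 * ((m + 1 : ℕ) : ℚ) - 1) - 1) / 2 + 1 ≤ (n : ℚ)}
      (l * m + 1) := by
  have hcount : (l : ℚ) * ((1 : ℚ) * (2 * ((m + 1 : ℕ) : ℚ) - 1) - 1) / 2 + 1 =
      ((l * m + 1 : ℕ) : ℚ) := by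
    push_cast
    ring
  simp only [hcount, Nat.cast_le]
  exact isLeast_Ici

lemma add_two_le_two_mul_of_le {l m c k : ℕ}
    (h : (l : ℚ) * ((c : ℚ) * (2 * ((m + 1 : ℕ) : ℚ) - 1) - 1) / 2 + 1 ≤ k) :
    l * (c * (2 * m + 1)) + 2 ≤ 2 * k + l := by
  have : ((l * (c * (2 * m + 1)) + 2 : ℕ) : ℚ) ≤ ((2 * k + l : ℕ) : ℚ) := by
    push_cast at h ⊢
    linarith
  exact_mod_cast this

lemma commutator_count_le_of_one {m n k : ℕ} (h : 1 * ((n + 2) * (2 * m + 1)) + 2 ≤ 2 * k + 1) :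
    (n + 2) * m + (n + 2) / 2 + 1 ≤ k := by
  have : (n + 2) * (2 * m + 1) = 2 * ((n + 2) * m) + (n + 2) := by ring
  omega

lemma commutator_count_le_of_add_two {l m n k : ℕ}
    (h : (l + 2) * ((n + 2) * (2 * m + 1)) + 2 ≤ 2 * k + (l + 2)) :
    (l * (n + 1) + 1) / 2 + (n + 2) * ((l + 2) * m + 1) ≤ k := by
  have h₁ : (l + 2) * ((n + 2) * (2 * m + 1)) =
      2 * ((n + 2) * ((l + 2) * m)) + l * (n + 1) + l + 2 * (n + 2) := by ring
  have h₂ : (n + 2) * ((l + 2) * m + 1) = (n + 2) * ((l + 2) * m) + (n + 2) := by ring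
  omega

/-- Let `l, g ≥ 1`, and for `e ≥ 1` let `h(e)` be the minimal integer with
`h(e) ≥ l(e(2g−1)−1)/2 + 1`. Suppose the equation for `c = 1` has a solution
`a₁,b₁,…,a_{h(1)},b_{h(1)}` generating a subgroup `H₁`. Then for every `c ≥ 1` the equation
`[u₁,v₁]⋯[u_{h(c)},v_{h(c)}] = (B_g^{w₁})^c⋯(B_g^{w_l})^c` has a solution whose generated
subgroup `H₂` satisfies `p(H₁) = p(H₂)`. -/
theorem solution_for_all_c (g l : ℕ) (hg : 1 ≤ g) (hl : 1 ≤ l)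
    (w : Fin l → Fg g) (h1 : ℕ)
    (hh1 : IsLeast
      {n : ℕ | (l : ℚ) * ((1 : ℚ) * (2 * (g : ℚ) - 1) - 1) / 2 + 1 ≤ (n : ℚ)} h1)
    (a b : Fin h1 → Fg g)
    (hab : (List.ofFn fun i => ⁅a i, b i⁆).prod =
      (List.ofFn fun i : Fin l => w i * Bg g * (w i)⁻¹).prod) :
    ∀ c : ℕ, 1 ≤ c → ∀ hc : ℕ,
      IsLeast
        {n : ℕ | (l : ℚ) * ((c : ℚ) * (2 * (g : ℚ) - 1) - 1) / 2 + 1 ≤ (n : ℚ)} hc →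
      ∃ u v : Fin hc → Fg g,
        (List.ofFn fun i => ⁅u i, v i⁆).prod =
          (List.ofFn fun i : Fin l => (w i * Bg g * (w i)⁻¹) ^ c).prod ∧
        Subgroup.map (pg g) (Subgroup.closure (Set.range a ∪ Set.range b)) =
          Subgroup.map (pg g) (Subgroup.closure (Set.range u ∪ Set.range v)) := by
  intro c hc_pos hc hhc
  obtain ⟨m, rfl⟩ : ∃ m, g = m + 1 := ⟨g - 1, by omega⟩
  have hbound := add_two_le_two_mul_of_le hhc.1
  rcases eq_or_ne c 1 with rfl | hc_ne
  · rw [Nat.cast_one] at hhc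
    obtain rfl := hhc.unique hh1
    exact ⟨a, b, by simpa using hab, rfl⟩
  obtain ⟨n, rfl⟩ : ∃ n, c = n + 2 := ⟨c - 2, by omega⟩
  have hC : ∀ i, w i * Bg (m + 1) * (w i)⁻¹ ∈ (pg (m + 1)).ker := fun i => by
    rw [pg, QuotientGroup.ker_mk']
    exact Subgroup.normalClosure_normal.conj_mem _
      (Subgroup.subset_normalClosure (Set.mem_singleton _)) _
  rcases eq_or_ne l 1 with rfl | hl_ne
  · obtain rfl : h1 = m + 1 := by simpa using hh1.unique (isLeast_commutator_count 1 m)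
    have hFin1 : ∀ f : Fin 1 → Fg (m + 1), (List.ofFn f).prod = f 0 := fun f => by simp
    rw [hFin1] at hab
    rw [hFin1, ← hab]
    obtain ⟨u, v, hprod, hsup⟩ := exists_commutators_eq_pow_of_mem _ a b (hab ▸ hC 0)
      (commutator_count_le_of_one hbound)
    exact ⟨u, v, hprod, Subgroup.map_eq_map_iff.2 hsup.symm⟩
  · obtain ⟨l, rfl⟩ : ∃ k, l = k + 2 := ⟨l - 2, by omega⟩
    obtain rfl := hh1.unique (isLeast_commutator_count (l + 2) m)
    obtain ⟨u, v, hprod, hsup⟩ := exists_commutators_eq_prod_pow _ _ hC a b hab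
      (commutator_count_le_of_add_two hbound)
    exact ⟨u, v, hprod, Subgroup.map_eq_map_iff.2 hsup.symm⟩

end SurfaceEq
end

section
/- Let G be a group, let a, b ∈ G, and let n ≥ 1 be an integer. Then [a,b]^n can be expressed as a product of at most ⌈(n+1)/2⌉ commutators of elements of G. -/
/-!
Write `c = ⁅a, b⁆`. For every integer `k` the identity
`⁅a ^ k, b⁆ * c ^ 2 = ⁅u, v⁆ * ⁅a ^ (k + 2), b⁆` trades two factors `c` for one commutator at the
cost of shifting `k` by two, so `⁅a ^ k, b⁆ * c ^ (2 * e)` is a product of `e + 1` commutators.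
Since `⁅a ^ 0, b⁆ = 1` and `⁅a ^ 1, b⁆ = c`, this covers both even and odd powers of `c`.
-/

open scoped commutatorElement

section

variable {G : Type*} [Group G]

def IsProdOfCommutators (m : ℕ) (g : G) : Prop :=
  ∃ u v : Fin m → G, g = (List.ofFn fun i => ⁅u i, v i⁆).prod

theorem isProdOfCommutators_zero_one : IsProdOfCommutators 0 (1 : G) :=
  ⟨Fin.elim0, Fin.elim0, by simp⟩

theorem IsProdOfCommutators.commutatorElement_mul {m : ℕ} {w : G}
    (h : IsProdOfCommutators m w) (x y : G) : IsProdOfCommutators (m + 1) (⁅x, y⁆ * w) := by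
  obtain ⟨u, v, rfl⟩ := h
  exact ⟨Fin.cons x u, Fin.cons y v, by simp [List.ofFn_succ]⟩

theorem commutatorElement_zpow_mul_sq (a b : G) (k : ℤ) :
    ⁅a ^ k, b⁆ * ⁅a, b⁆ ^ 2 =
      ⁅⁅a ^ k, b⁆ * ⁅a, b⁆ * a ^ (-k), a ^ (k + 1) * ⁅a, b⁆ * a ^ (-k)⁆ * ⁅a ^ (k + 2), b⁆ := by
  simp only [commutatorElement_def, sq]
  group

theorem isProdOfCommutators_commutatorElement_zpow_mul_pow (a b : G) (e : ℕ) (k : ℤ) :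
    IsProdOfCommutators (e + 1) (⁅a ^ k, b⁆ * ⁅a, b⁆ ^ (2 * e)) := by
  induction e generalizing k with
  | zero => simpa using isProdOfCommutators_zero_one.commutatorElement_mul (a ^ k) b
  | succ e ih =>
    rw [show 2 * (e + 1) = 2 + 2 * e by ring, pow_add, ← mul_assoc, commutatorElement_zpow_mul_sq,
      mul_assoc]
    exact (ih (k + 2)).commutatorElement_mul _ _

end

theorem commutator_pow_is_product_of_commutators_general {G : Type*} [Group G] (a b : G)
    (n : ℕ) :
    ∃ m : ℕ, m ≤ (n + 2) / 2 ∧ ∃ u v : Fin m → G,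
      ⁅a, b⁆ ^ n = (List.ofFn fun i => ⁅u i, v i⁆).prod := by
  obtain ⟨e, rfl | rfl⟩ := Nat.even_or_odd' n
  · refine ⟨e + 1, by omega, ?_⟩
    simpa only [IsProdOfCommutators, zpow_zero, commutatorElement_one_left, one_mul] using
      isProdOfCommutators_commutatorElement_zpow_mul_pow a b e 0
  · refine ⟨e + 1, by omega, ?_⟩
    simpa only [IsProdOfCommutators, zpow_one, ← pow_succ'] using
      isProdOfCommutators_commutatorElement_zpow_mul_pow a b e 1

/-- Let `G` be a group, `a b : G` and `n ≥ 1`. Then `[a,b]^n` is a product of at most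
`⌈(n+1)/2⌉` commutators of elements of `G`.  (In natural numbers, `⌈(n+1)/2⌉ = (n+2)/2`.) -/
theorem commutator_pow_is_product_of_commutators {G : Type*} [Group G] (a b : G)
    (n : ℕ) (hn : 1 ≤ n) :
    ∃ m : ℕ, m ≤ (n + 2) / 2 ∧ ∃ u v : Fin m → G,
      ⁅a, b⁆ ^ n = (List.ofFn fun i => ⁅u i, v i⁆).prod :=
  commutator_pow_is_product_of_commutators_general a b n
end

section
/- Let l ≥ 1 and let w₁, …, w_l be pairwise distinct elements of F₂. If u, v ∈ F₂ satisfy [u,v] = B^{w₁} B^{w₂} ⋯ B^{w_l}, then the index of the subgroup p(⟨u,v⟩) in F₂/[F₂,F₂] is exactly l. -/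
open scoped commutatorElement

/-!
Send `F₂` to the integer Heisenberg group by `x ↦ [[1,1,0],[0,1,0],[0,0,1]]`,
`y ↦ [[1,0,0],[0,1,1],[0,0,1]]`. The two off-diagonal coordinates of the image of `g` are the
coordinates of `p g ∈ F₂/[F₂,F₂] ≅ ℤ²`, and the commutator of two Heisenberg matrices is central
with corner entry the determinant of their coordinate vectors. Since `B` maps to the central
generator, so does each of its conjugates, and `[u,v] = B^{w₁} ⋯ B^{w_l}` gives
`det (p u, p v) = l ≠ 0`. The index of the lattice spanned by `p u, p v` is `|det (p u, p v)| = l`.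
-/

/-- `⟨a, b, c⟩` stands for the matrix `[[1, a, c], [0, 1, b], [0, 0, 1]]`. -/
@[ext] structure Heis where
  a : ℤ
  b : ℤ
  c : ℤ

namespace Heis

instance : Mul Heis := ⟨fun g h => ⟨g.a + h.a, g.b + h.b, g.c + h.c + g.a * h.b⟩⟩
instance : One Heis := ⟨⟨0, 0, 0⟩⟩
instance : Inv Heis := ⟨fun g => ⟨-g.a, -g.b, -g.c + g.a * g.b⟩⟩

@[simp] lemma mul_a (g h : Heis) : (g * h).a = g.a + h.a := rfl
@[simp] lemma mul_b (g h : Heis) : (g * h).b = g.b + h.b := rfl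
@[simp] lemma mul_c (g h : Heis) : (g * h).c = g.c + h.c + g.a * h.b := rfl
@[simp] lemma one_a : (1 : Heis).a = 0 := rfl
@[simp] lemma one_b : (1 : Heis).b = 0 := rfl
@[simp] lemma one_c : (1 : Heis).c = 0 := rfl
@[simp] lemma inv_a (g : Heis) : g⁻¹.a = -g.a := rfl
@[simp] lemma inv_b (g : Heis) : g⁻¹.b = -g.b := rfl
@[simp] lemma inv_c (g : Heis) : g⁻¹.c = -g.c + g.a * g.b := rfl

instance : Group Heis where
  mul_assoc g h k := by ext <;> simp <;> ring
  one_mul g := by ext <;> simp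
  mul_one g := by ext <;> simp
  inv_mul_cancel g := by ext <;> simp

lemma conj_center (g : Heis) (c : ℤ) : g * ⟨0, 0, c⟩ * g⁻¹ = ⟨0, 0, c⟩ := by
  ext <;> simp; ring

lemma center_pow (c : ℤ) (n : ℕ) : (⟨0, 0, c⟩ : Heis) ^ n = ⟨0, 0, n * c⟩ := by
  induction n with
  | zero => ext <;> simp
  | succ k ih => ext <;> simp [pow_succ, ih]; ring

lemma commutator_eq (g h : Heis) : ⁅g, h⁆ = ⟨0, 0, g.a * h.b - h.a * g.b⟩ := by
  ext <;> simp [commutatorElement_def]; ring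

end Heis

theorem AddSubgroup.index_closure_range_eq_natAbs_det {E ι : Type*} [AddCommGroup E]
    [Fintype ι] [DecidableEq ι] (b : Module.Basis ι ℤ E) {v : ι → E} (hv : b.det v ≠ 0) :
    (AddSubgroup.closure (Set.range v)).index = (b.det v).natAbs := by
  have hli : LinearIndependent ℤ v := by
    refine LinearIndependent.of_comp b.equivFun.toLinearMap ?_
    rw [Module.Basis.det_apply] at hv
    exact Matrix.linearIndependent_cols_of_det_ne_zero hv
  rw [← Submodule.span_int_eq_addSubgroupClosure,
    AddSubgroup.index_eq_natAbs_det b _ (Module.Basis.span hli)]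
  congr 3 with i
  exact congrArg Subtype.val (Module.Basis.span_apply hli i)

namespace SurfaceEq

/-- The free group on two generators. -/
abbrev F2 : Type := FreeGroup (Fin 2)

/-- The first generator `x` of `F₂`. -/
def x : F2 := FreeGroup.of 0

/-- The second generator `y` of `F₂`. -/
def y : F2 := FreeGroup.of 1

/-- `B = [x,y]`. -/
def B : F2 := ⁅x, y⁆

def toHeis : F2 →* Heis := FreeGroup.lift ![⟨1, 0, 0⟩, ⟨0, 1, 0⟩]

lemma toHeis_B : toHeis B = ⟨0, 0, 1⟩ := by
  simp [B, x, y, toHeis, Heis.commutator_eq]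

lemma toHeis_prod_conj_B {l : ℕ} (w : Fin l → F2) :
    toHeis (List.ofFn fun i : Fin l => w i * B * (w i)⁻¹).prod = ⟨0, 0, l⟩ := by
  simp [map_list_prod, List.map_ofFn, Function.comp_def, toHeis_B, Heis.conj_center,
    Heis.center_pow]

-- `FreeAbelianGroup (Fin 2)` is by definition `Additive (Abelianization F2)`.
noncomputable def abelianizationBasis : Module.Basis (Fin 2) ℤ (Additive (Abelianization F2)) :=
  FreeAbelianGroup.basis (Fin 2)

lemma abelianizationBasis_repr_of (g : F2) :
    ⇑(abelianizationBasis.repr (Additive.ofMul (Abelianization.of g))) =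
      ![(toHeis g).a, (toHeis g).b] := by
  induction g using FreeGroup.induction_on with
  | C1 => ext i; fin_cases i <;> simp
  | of i =>
    change ⇑(FreeAbelianGroup.toFinsupp (FreeAbelianGroup.of i)) = _
    ext j; fin_cases i <;> fin_cases j <;> simp [toHeis]
  | inv_of i h =>
    rw [map_inv, ofMul_inv, map_neg, Finsupp.coe_neg, h, map_inv]
    ext j; fin_cases j <;> simp
  | mul g h hg hh =>
    rw [map_mul, ofMul_mul, map_add, Finsupp.coe_add, hg, hh, map_mul]
    ext j; fin_cases j <;> simp

lemma abelianizationBasis_det_eq_toHeis_commutator_c (u v : F2) :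
    abelianizationBasis.det
        ![Additive.ofMul (Abelianization.of u), Additive.ofMul (Abelianization.of v)] =
      (toHeis ⁅u, v⁆).c := by
  rw [Module.Basis.det_apply, Matrix.det_fin_two, map_commutatorElement, Heis.commutator_eq]
  simp [Module.Basis.toMatrix_apply, abelianizationBasis_repr_of]

theorem index_of_single_commutator_solution_general (l : ℕ) (hl : 1 ≤ l)
    (w : Fin l → F2) (u v : F2)
    (huv : ⁅u, v⁆ = (List.ofFn fun i : Fin l => w i * B * (w i)⁻¹).prod) :
    (Subgroup.map (Abelianization.of : F2 →* Abelianization F2)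
        (Subgroup.closure {u, v})).index = l := by
  have hdet : abelianizationBasis.det
      ![Additive.ofMul (Abelianization.of u), Additive.ofMul (Abelianization.of v)] = l := by
    rw [abelianizationBasis_det_eq_toHeis_commutator_c, huv, toHeis_prod_conj_B]
  rw [MonoidHom.map_closure, Set.image_pair, ← Subgroup.index_toAddSubgroup,
    Subgroup.toAddSubgroup_closure, ← Equiv.image_symm_eq_preimage, Set.image_pair,
    Additive.toMul_symm_eq, ← Matrix.range_cons_cons_empty _ _ ![],
    AddSubgroup.index_closure_range_eq_natAbs_det abelianizationBasis (by omega), hdet,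
    Int.natAbs_natCast]

/-- Let `l ≥ 1` and `w₁,…,w_l` pairwise distinct elements of `F₂`. If `u, v ∈ F₂` satisfy
`[u,v] = B^{w₁}·B^{w₂}⋯B^{w_l}`, then the index of `p(⟨u,v⟩)` in the abelianization
`F₂/[F₂,F₂]` is exactly `l`. -/
theorem index_of_single_commutator_solution (l : ℕ) (hl : 1 ≤ l)
    (w : Fin l → F2) (hw : Function.Injective w) (u v : F2)
    (huv : ⁅u, v⁆ = (List.ofFn fun i : Fin l => w i * B * (w i)⁻¹).prod) :
    (Subgroup.map (Abelianization.of : F2 →* Abelianization F2)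
        (Subgroup.closure {u, v})).index = l :=
  index_of_single_commutator_solution_general l hl w u v huv

end SurfaceEq
end

section
/- In F₂ = ⟨x,y⟩, the elements u₁ = x, v₁ = y³, u₂ = y³·x·y⁻²·x⁻¹·y⁻¹·x·y²·x⁻¹·y⁻³, v₂ = y²·x²·y²·x⁻¹·y⁻³ satisfy [u₁,v₁][u₂,v₂] = [x,y]²·([x,y]^y)². -/
namespace SurfaceEq

open scoped commutatorElement

/-- In `F₂ = ⟨x,y⟩` the elements `u₁ = x`, `v₁ = y³`,
`u₂ = y³·x·y⁻²·x⁻¹·y⁻¹·x·y²·x⁻¹·y⁻³`, `v₂ = y²·x²·y²·x⁻¹·y⁻³` satisfy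
`[u₁,v₁][u₂,v₂] = [x,y]²·([x,y]^y)²`. -/
theorem commutator_identity_l2_c2 :
    ⁅x, y ^ 3⁆ *
      ⁅y ^ 3 * x * (y ^ 2)⁻¹ * x⁻¹ * y⁻¹ * x * y ^ 2 * x⁻¹ * (y ^ 3)⁻¹,
        y ^ 2 * x ^ 2 * y ^ 2 * x⁻¹ * (y ^ 3)⁻¹⁆ =
      ⁅x, y⁆ ^ 2 * (y * ⁅x, y⁆ * y⁻¹) ^ 2 := by
  simp only [commutatorElement_def, sq]
  group

end SurfaceEq
end

section
/- Let k > l ≥ 1 be integers and in F₂ = ⟨x,y⟩ define, for i = 1, …, l, r_i = y·x·y^{i−1}·x⁻¹·y⁻¹·x·y^{−i+1}·x⁻¹·y⁻¹ and s_i = y·x·y^{i−1}·x⁻¹·B^{l−i+1}·y·B^{k−l}·y^{−i}·x²·y^{−i+1}·x⁻¹·y⁻¹, where B = [x,y]. Then for every t with 1 ≤ t ≤ l, [r₁,s₁]⋯[r_t,s_t] = B^l·y·B^{k−l}·y⁻¹·B^t·y^{t+1}·B^{l−k}·y⁻¹·B^{t−1−l}·x·y^{−t+1}·x⁻¹·y⁻¹.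 -/
namespace SurfaceEq

open scoped commutatorElement

/-!
Write `u_i = y x y^{i-1} x⁻¹`. Then `r_i = u_i y⁻¹ u_i⁻¹` and `s_i = u_i w_i u_i⁻¹` with
`w_i = B^{l-i+1} y B^{k-l} y^{-i} x`, so `[r_i, s_i] = u_i [y⁻¹, w_i] u_i⁻¹`. Multiplying the claimed
value of the product for `t = i - 1` by this commutator, everything cancels freely except two
occurrences of `x y x⁻¹`; replacing them by `B y` yields the claimed value for `t = i`. For `t = 0`
the formula reduces to `B⁻¹ · x y x⁻¹ y⁻¹ = 1`, so the identity follows by induction on `t`.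
-/

theorem prod_map_range_eq_of_mul_eq {M : Type*} [Monoid M] {f P : ℕ → M} {n : ℕ}
    (h0 : P 0 = 1) (hstep : ∀ j < n, P j * f j = P (j + 1)) :
    ∀ t ≤ n, ((List.range t).map f).prod = P t := by
  intro t ht
  induction t with
  | zero => simp [h0]
  | succ t ih => rw [List.prod_range_succ, ih (by omega), hstep t (by omega)]

section FirstBlock

variable {G : Type*} [Group G] (a b : G) (k l : ℤ)

def firstBlockR (i : ℤ) : G :=
  b * a * b ^ (i - 1) * a⁻¹ * b⁻¹ * a * b ^ (-i + 1) * a⁻¹ * b⁻¹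

def firstBlockS (i : ℤ) : G :=
  b * a * b ^ (i - 1) * a⁻¹ * ⁅a, b⁆ ^ (l - i + 1) * b * ⁅a, b⁆ ^ (k - l) * b ^ (-i) * a ^ 2 *
    b ^ (-i + 1) * a⁻¹ * b⁻¹

def firstBlockPartialProduct (t : ℤ) : G :=
  ⁅a, b⁆ ^ l * b * ⁅a, b⁆ ^ (k - l) * b⁻¹ * ⁅a, b⁆ ^ t * b ^ (t + 1) * ⁅a, b⁆ ^ (l - k) * b⁻¹ *
    ⁅a, b⁆ ^ (t - 1 - l) * a * b ^ (-t + 1) * a⁻¹ * b⁻¹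

theorem firstBlockPartialProduct_zero : firstBlockPartialProduct a b k l 0 = 1 := by
  unfold firstBlockPartialProduct
  group

theorem firstBlockPartialProduct_mul_commutator (t : ℤ) :
    firstBlockPartialProduct a b k l t * ⁅firstBlockR a b (t + 1), firstBlockS a b k l (t + 1)⁆ =
      firstBlockPartialProduct a b k l (t + 1) := by
  unfold firstBlockPartialProduct firstBlockR firstBlockS
  have hconj : a * b * a⁻¹ = ⁅a, b⁆ * b := by group
  -- with `⁅a, b⁆` an atom, `group` can normalize both sides up to uses of `hconj`
  generalize ⁅a, b⁆ = c at hconj ⊢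
  calc _ = c ^ l * b * c ^ (k - l) * b⁻¹ * c ^ t * b ^ (t + 1) * c ^ (l - k) * b⁻¹ *
        c ^ (t - 1 - l) * (a * b * a⁻¹) * b⁻¹ * c ^ (l - t) * b * c ^ (k - l) * b ^ (-(t + 1)) *
        (a * b * a⁻¹) * b ^ (t + 1) * c ^ (l - k) * b⁻¹ * c ^ (t - l) * a * b ^ (-t) * a⁻¹ * b⁻¹ := by
        group
    _ = _ := by rw [hconj]; group

end FirstBlock

theorem partial_products_first_block_general (k l : ℕ)
    (r s : ℕ → F2)
    (hr : ∀ i : ℕ, 1 ≤ i → i ≤ l →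
      r i = y * x * y ^ ((i : ℤ) - 1) * x⁻¹ * y⁻¹ * x * y ^ (-(i : ℤ) + 1) * x⁻¹ * y⁻¹)
    (hs : ∀ i : ℕ, 1 ≤ i → i ≤ l →
      s i = y * x * y ^ ((i : ℤ) - 1) * x⁻¹ * B ^ ((l : ℤ) - (i : ℤ) + 1) * y *
        B ^ ((k : ℤ) - (l : ℤ)) * y ^ (-(i : ℤ)) * x ^ 2 * y ^ (-(i : ℤ) + 1) * x⁻¹ * y⁻¹) :
    ∀ t : ℕ, 1 ≤ t → t ≤ l →
      ((List.range t).map fun j => ⁅r (j + 1), s (j + 1)⁆).prod =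
        B ^ (l : ℤ) * y * B ^ ((k : ℤ) - (l : ℤ)) * y⁻¹ * B ^ (t : ℤ) * y ^ ((t : ℤ) + 1) *
          B ^ ((l : ℤ) - (k : ℤ)) * y⁻¹ * B ^ ((t : ℤ) - 1 - (l : ℤ)) * x *
          y ^ (-(t : ℤ) + 1) * x⁻¹ * y⁻¹ := by
  intro t _ htl
  refine prod_map_range_eq_of_mul_eq (P := fun t : ℕ => firstBlockPartialProduct x y k l t)
    (firstBlockPartialProduct_zero x y k l) (fun j hj => ?_) t htl
  rw [hr (j + 1) j.succ_pos hj, hs (j + 1) j.succ_pos hj]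
  push_cast
  exact firstBlockPartialProduct_mul_commutator x y k l j

/-- Let `k > l ≥ 1` and, for `i = 1,…,l`, let
`r_i = y·x·y^{i−1}·x⁻¹·y⁻¹·x·y^{−i+1}·x⁻¹·y⁻¹` and
`s_i = y·x·y^{i−1}·x⁻¹·B^{l−i+1}·y·B^{k−l}·y^{−i}·x²·y^{−i+1}·x⁻¹·y⁻¹`.
Then for every `1 ≤ t ≤ l`,
`[r₁,s₁]⋯[r_t,s_t] = B^l·y·B^{k−l}·y⁻¹·B^t·y^{t+1}·B^{l−k}·y⁻¹·B^{t−1−l}·x·y^{−t+1}·x⁻¹·y⁻¹`. -/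
theorem partial_products_first_block (k l : ℕ) (hl : 1 ≤ l) (hkl : l < k)
    (r s : ℕ → F2)
    (hr : ∀ i : ℕ, 1 ≤ i → i ≤ l →
      r i = y * x * y ^ ((i : ℤ) - 1) * x⁻¹ * y⁻¹ * x * y ^ (-(i : ℤ) + 1) * x⁻¹ * y⁻¹)
    (hs : ∀ i : ℕ, 1 ≤ i → i ≤ l →
      s i = y * x * y ^ ((i : ℤ) - 1) * x⁻¹ * B ^ ((l : ℤ) - (i : ℤ) + 1) * y *
        B ^ ((k : ℤ) - (l : ℤ)) * y ^ (-(i : ℤ)) * x ^ 2 * y ^ (-(i : ℤ) + 1) * x⁻¹ * y⁻¹) :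
    ∀ t : ℕ, 1 ≤ t → t ≤ l →
      ((List.range t).map fun j => ⁅r (j + 1), s (j + 1)⁆).prod =
        B ^ (l : ℤ) * y * B ^ ((k : ℤ) - (l : ℤ)) * y⁻¹ * B ^ (t : ℤ) * y ^ ((t : ℤ) + 1) *
          B ^ ((l : ℤ) - (k : ℤ)) * y⁻¹ * B ^ ((t : ℤ) - 1 - (l : ℤ)) * x *
          y ^ (-(t : ℤ) + 1) * x⁻¹ * y⁻¹ :=
  partial_products_first_block_general k l r s hr hs

end SurfaceEq
end

section
/- Let k and l be integers with k − l ≥ 2 and l ≥ 0, and in F₂ = ⟨x,y⟩ define, for j = 1, …, k−l−1, r_{l+j} = y·x·y^{l+j}·x⁻¹·y⁻¹·x·y^{−l−j}·x⁻¹·y⁻¹ and s_{l+j} = y·x·y^{l+j}·x⁻¹·B^{k−l−j}·y^{−l−j}·x²·y^{−l−j}·x⁻¹·y⁻¹, where B = [x,y]. Then for every t with 1 ≤ t ≤ k−l−1, [r_{l+1},s_{l+1}]⋯[r_{l+t},s_{l+t}] = y·x·y^{l+1}·x⁻¹·(y⁻¹·B^{k−l−1}·y^{−l−1}·B^t·y^{l+t+1}·B^{l+t−k})·x·y^{−l−t}·x⁻¹·y⁻¹.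 -/
namespace SurfaceEq

open scoped commutatorElement

/-! The argument is a telescoping induction. The closed form also holds for the empty product
(`t = 0`), and multiplying the closed form for `t` by the next commutator `[r, s]` gives the
closed form for `t + 1`: after expanding, the only relations needed are `a b a⁻¹ b⁻¹ = [a, b]`
and `a b a⁻¹ = [a, b] b`, which let the powers of `[a, b]` merge. -/

section Words

variable {G : Type*} [Group G] (a b : G)

def rWord (n : ℤ) : G :=
  b * a * b ^ n * a⁻¹ * b⁻¹ * a * b ^ (-n) * a⁻¹ * b⁻¹

/-- The paper's `s_n` is `sWord x y (k - n) n`. -/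
def sWord (m n : ℤ) : G :=
  b * a * b ^ n * a⁻¹ * ⁅a, b⁆ ^ m * b ^ (-n) * a ^ 2 * b ^ (-n) * a⁻¹ * b⁻¹

def partialProdClosedForm (k l t : ℤ) : G :=
  b * a * b ^ (l + 1) * a⁻¹ *
    (b⁻¹ * ⁅a, b⁆ ^ (k - l - 1) * b ^ (-l - 1) * ⁅a, b⁆ ^ t *
      b ^ (l + t + 1) * ⁅a, b⁆ ^ (l + t - k)) *
    a * b ^ (-l - t) * a⁻¹ * b⁻¹

theorem partialProdClosedForm_zero (k l : ℤ) : partialProdClosedForm a b k l 0 = 1 := by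
  unfold partialProdClosedForm
  generalize hc : ⁅a, b⁆ = c
  have hc' : c⁻¹ = b * a * b⁻¹ * a⁻¹ := by rw [← hc, commutatorElement_def]; group
  calc _ = b * a * b ^ (l + 1) * a⁻¹ * b⁻¹ * (c ^ (k - l - 1) * c ^ (l - k)) *
          a * b ^ (-l) * a⁻¹ * b⁻¹ := by group
    _ = 1 := by rw [← zpow_add, show k - l - 1 + (l - k) = -1 by ring, zpow_neg_one, hc']; group

theorem partialProdClosedForm_mul_commutator (k l t : ℤ) :
    partialProdClosedForm a b k l t *
        ⁅rWord a b (l + (t + 1)), sWord a b (k - l - (t + 1)) (l + (t + 1))⁆ =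
      partialProdClosedForm a b k l (t + 1) := by
  unfold partialProdClosedForm rWord sWord
  have hconj : a * b * a⁻¹ = ⁅a, b⁆ * b := by rw [commutatorElement_def]; group
  have hcomm : a * b * a⁻¹ * b⁻¹ = ⁅a, b⁆ := (commutatorElement_def a b).symm
  generalize ⁅a, b⁆ = c at hconj hcomm ⊢
  calc _ = b * a * b ^ (l + 1) * a⁻¹ * b⁻¹ * c ^ (k - l - 1) * b ^ (-l - 1) * c ^ t *
          b ^ (l + t + 1) * c ^ (l + t - k) * (a * b * a⁻¹ * b⁻¹) *
          c ^ (k - l - t - 1) * b ^ (-l - t - 1) * (a * b * a⁻¹) *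
          b ^ (l + t + 1) * c ^ (l + t + 1 - k) *
          a * b ^ (-l - t - 1) * a⁻¹ * b⁻¹ := by group
    _ = b * a * b ^ (l + 1) * a⁻¹ * b⁻¹ * c ^ (k - l - 1) * b ^ (-l - 1) * c ^ t *
          b ^ (l + t + 1) * c ^ (l + t - k) * c *
          c ^ (k - l - t - 1) * b ^ (-l - t - 1) * (c * b) *
          b ^ (l + t + 1) * c ^ (l + t + 1 - k) *
          a * b ^ (-l - t - 1) * a⁻¹ * b⁻¹ := by rw [hcomm, hconj]
    _ = _ := by group

theorem prod_commutator_rWord_sWord (k l : ℤ) (T : ℕ) (r s : ℕ → G)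
    (hr : ∀ j : ℕ, 1 ≤ j → j ≤ T → r j = rWord a b (l + j))
    (hs : ∀ j : ℕ, 1 ≤ j → j ≤ T → s j = sWord a b (k - l - j) (l + j)) :
    ∀ t ≤ T, ((List.range t).map fun j => ⁅r (j + 1), s (j + 1)⁆).prod =
      partialProdClosedForm a b k l t := by
  intro t
  induction t with
  | zero => intro _; exact (partialProdClosedForm_zero a b k l).symm
  | succ t ih =>
    intro ht
    rw [List.range_succ, List.map_append, List.prod_append, List.map_singleton,
      List.prod_singleton, ih (by omega), hr (t + 1) (by omega) ht, hs (t + 1) (by omega) ht]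
    push_cast
    exact partialProdClosedForm_mul_commutator a b k l t

end Words

theorem partial_products_second_block_general (k l : ℕ)
    (r s : ℕ → F2)
    (hr : ∀ j : ℕ, 1 ≤ j → j ≤ k - l - 1 →
      r (l + j) = y * x * y ^ ((l : ℤ) + (j : ℤ)) * x⁻¹ * y⁻¹ * x *
        y ^ (-(l : ℤ) - (j : ℤ)) * x⁻¹ * y⁻¹)
    (hs : ∀ j : ℕ, 1 ≤ j → j ≤ k - l - 1 →
      s (l + j) = y * x * y ^ ((l : ℤ) + (j : ℤ)) * x⁻¹ * B ^ ((k : ℤ) - (l : ℤ) - (j : ℤ)) *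
        y ^ (-(l : ℤ) - (j : ℤ)) * x ^ 2 * y ^ (-(l : ℤ) - (j : ℤ)) * x⁻¹ * y⁻¹) :
    ∀ t : ℕ, 1 ≤ t → t ≤ k - l - 1 →
      ((List.range t).map fun j => ⁅r (l + (j + 1)), s (l + (j + 1))⁆).prod =
        y * x * y ^ ((l : ℤ) + 1) * x⁻¹ *
          (y⁻¹ * B ^ ((k : ℤ) - (l : ℤ) - 1) * y ^ (-(l : ℤ) - 1) * B ^ (t : ℤ) *
            y ^ ((l : ℤ) + (t : ℤ) + 1) * B ^ ((l : ℤ) + (t : ℤ) - (k : ℤ))) *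
          x * y ^ (-(l : ℤ) - (t : ℤ)) * x⁻¹ * y⁻¹ := by
  intro t _ ht
  exact prod_commutator_rWord_sWord x y k l (k - l - 1) (fun j => r (l + j)) (fun j => s (l + j))
    (fun j h1 h2 => by rw [hr j h1 h2, rWord, neg_add'])
    (fun j h1 h2 => by rw [hs j h1 h2, sWord, neg_add']; rfl) t ht

/-- Let `k − l ≥ 2`, `l ≥ 0` and, for `j = 1,…,k−l−1`, let
`r_{l+j} = y·x·y^{l+j}·x⁻¹·y⁻¹·x·y^{−l−j}·x⁻¹·y⁻¹` and
`s_{l+j} = y·x·y^{l+j}·x⁻¹·B^{k−l−j}·y^{−l−j}·x²·y^{−l−j}·x⁻¹·y⁻¹`.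
Then for every `1 ≤ t ≤ k−l−1`,
`[r_{l+1},s_{l+1}]⋯[r_{l+t},s_{l+t}] =
  y·x·y^{l+1}·x⁻¹·(y⁻¹·B^{k−l−1}·y^{−l−1}·B^t·y^{l+t+1}·B^{l+t−k})·x·y^{−l−t}·x⁻¹·y⁻¹`. -/
theorem partial_products_second_block (k l : ℕ) (hkl : l + 2 ≤ k)
    (r s : ℕ → F2)
    (hr : ∀ j : ℕ, 1 ≤ j → j ≤ k - l - 1 →
      r (l + j) = y * x * y ^ ((l : ℤ) + (j : ℤ)) * x⁻¹ * y⁻¹ * x *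
        y ^ (-(l : ℤ) - (j : ℤ)) * x⁻¹ * y⁻¹)
    (hs : ∀ j : ℕ, 1 ≤ j → j ≤ k - l - 1 →
      s (l + j) = y * x * y ^ ((l : ℤ) + (j : ℤ)) * x⁻¹ * B ^ ((k : ℤ) - (l : ℤ) - (j : ℤ)) *
        y ^ (-(l : ℤ) - (j : ℤ)) * x ^ 2 * y ^ (-(l : ℤ) - (j : ℤ)) * x⁻¹ * y⁻¹) :
    ∀ t : ℕ, 1 ≤ t → t ≤ k - l - 1 →
      ((List.range t).map fun j => ⁅r (l + (j + 1)), s (l + (j + 1))⁆).prod =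
        y * x * y ^ ((l : ℤ) + 1) * x⁻¹ *
          (y⁻¹ * B ^ ((k : ℤ) - (l : ℤ) - 1) * y ^ (-(l : ℤ) - 1) * B ^ (t : ℤ) *
            y ^ ((l : ℤ) + (t : ℤ) + 1) * B ^ ((l : ℤ) + (t : ℤ) - (k : ℤ))) *
          x * y ^ (-(l : ℤ) - (t : ℤ)) * x⁻¹ * y⁻¹ :=
  partial_products_second_block_general k l r s hr hs

end SurfaceEq
end

section
/- Let k > l ≥ 0 be integers and in F₂ = ⟨x,y⟩ with B = [x,y] define: r_i = y·x·y^{i−1}·x⁻¹·y⁻¹·x·y^{−i+1}·x⁻¹·y⁻¹ and s_i = y·x·y^{i−1}·x⁻¹·B^{l−i+1}·y·B^{k−l}·y^{−i}·x²·y^{−i+1}·x⁻¹·y⁻¹ for i = 1, …, l; r_{l+j} = y·x·y^{l+j}·x⁻¹·y⁻¹·x·y^{−l−j}·x⁻¹·y⁻¹ and s_{l+j} = y·x·y^{l+j}·x⁻¹·B^{k−l−j}·y^{−l−j}·x²·y^{−l−j}·x⁻¹·y⁻¹ for j = 1, …, k−l−1; r_k = y·x·y^{k+1}·x⁻¹·y⁻¹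 and s_k = y·x·y⁻¹·x⁻¹·y·x⁻¹·y⁻¹. Then [r₁,s₁][r₂,s₂]⋯[r_k,s_k] = B^l · (B^y)^{k−l} · B^k. -/
namespace SurfaceEq

open scoped commutatorElement

/-!
Each commutator `[rᵢ, sᵢ]` equals `Tᵢ₋₁ Tᵢ⁻¹` for explicit words `Tₘ = tailProduct x y k l m`
(the closed form of `[r_{m+1}, s_{m+1}] ⋯ [r_k, s_k]`, so `T_k = 1`), hence the product
telescopes to `T₀ = B^l (B^y)^{k-l} B^k`.
-/

section TailProduct

variable {G : Type*} [Group G] (a b : G)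

lemma commutatorElement_zpow_eq_mul (n : ℤ) :
    ⁅a, b⁆ ^ n = a * b * a⁻¹ * b⁻¹ * ⁅a, b⁆ ^ (n - 1) := by
  rw [← commutatorElement_def, ← zpow_one_add]
  ring_nf

/-- The two branches agree at `m = l`. -/
def tailProduct (k l m : ℕ) : G :=
  if m ≤ l then
    b * a * b ^ (m : ℤ) * a⁻¹ * b⁻¹ * ⁅a, b⁆ ^ ((l : ℤ) - m) * b * ⁅a, b⁆ ^ ((k : ℤ) - l) *
      b ^ (-(m : ℤ) - 1) * ⁅a, b⁆ ^ ((k : ℤ) - m)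
  else if m < k then
    b * a * b ^ (m : ℤ) * a⁻¹ * ⁅a, b⁆ ^ ((k : ℤ) - m) * b ^ (-(m : ℤ) - 1) * ⁅a, b⁆ ^ ((k : ℤ) - m)
  else 1

variable {a b}

lemma tailProduct_of_le {k l m : ℕ} (h : m ≤ l) :
    tailProduct a b k l m =
      b * a * b ^ (m : ℤ) * a⁻¹ * b⁻¹ * ⁅a, b⁆ ^ ((l : ℤ) - m) * b * ⁅a, b⁆ ^ ((k : ℤ) - l) *
        b ^ (-(m : ℤ) - 1) * ⁅a, b⁆ ^ ((k : ℤ) - m) :=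
  if_pos h

lemma tailProduct_of_ge_of_lt {k l m : ℕ} (hl : l ≤ m) (hk : m < k) :
    tailProduct a b k l m =
      b * a * b ^ (m : ℤ) * a⁻¹ * ⁅a, b⁆ ^ ((k : ℤ) - m) * b ^ (-(m : ℤ) - 1) *
        ⁅a, b⁆ ^ ((k : ℤ) - m) := by
  rcases hl.eq_or_lt with rfl | hlt
  · rw [tailProduct_of_le le_rfl, sub_self, zpow_zero]
    group
  · exact (if_neg hlt.not_ge).trans (if_pos hk)

lemma tailProduct_self {k l : ℕ} (h : l < k) : tailProduct a b k l k = 1 := by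
  simp only [tailProduct, if_neg h.not_ge, lt_irrefl, if_false]

lemma tailProduct_zero {k l : ℕ} (h : l ≤ k) :
    tailProduct a b k l 0 = ⁅a, b⁆ ^ l * (b * ⁅a, b⁆ * b⁻¹) ^ (k - l) * ⁅a, b⁆ ^ k := by
  rw [tailProduct_of_le (Nat.zero_le l), conj_pow, ← zpow_natCast ⁅a, b⁆ l,
    ← zpow_natCast ⁅a, b⁆ k, ← zpow_natCast ⁅a, b⁆ (k - l), Nat.cast_sub h]
  group

lemma commutator_eq_tailProduct_div_of_le {k l i : ℕ} (hi : 1 ≤ i) (hil : i ≤ l) :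
    ⁅b * a * b ^ ((i : ℤ) - 1) * a⁻¹ * b⁻¹ * a * b ^ (-(i : ℤ) + 1) * a⁻¹ * b⁻¹,
      b * a * b ^ ((i : ℤ) - 1) * a⁻¹ * ⁅a, b⁆ ^ ((l : ℤ) - (i : ℤ) + 1) * b *
        ⁅a, b⁆ ^ ((k : ℤ) - (l : ℤ)) * b ^ (-(i : ℤ)) * a ^ 2 * b ^ (-(i : ℤ) + 1) * a⁻¹ * b⁻¹⁆ =
      tailProduct a b k l (i - 1) / tailProduct a b k l i := by
  rw [tailProduct_of_le (by omega), tailProduct_of_le hil,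
    commutatorElement_zpow_eq_mul a b ((l : ℤ) - i + 1),
    commutatorElement_zpow_eq_mul a b ((l : ℤ) - ↑(i - 1)),
    commutatorElement_zpow_eq_mul a b ((k : ℤ) - ↑(i - 1)), Nat.cast_sub hi, div_eq_mul_inv]
  push_cast
  generalize ⁅a, b⁆ = c
  group

lemma commutator_eq_tailProduct_div_of_gt {k l j : ℕ} (hj : 1 ≤ j) (hjk : l + j < k) :
    ⁅b * a * b ^ ((l : ℤ) + (j : ℤ)) * a⁻¹ * b⁻¹ * a * b ^ (-(l : ℤ) - (j : ℤ)) * a⁻¹ * b⁻¹,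
      b * a * b ^ ((l : ℤ) + (j : ℤ)) * a⁻¹ * ⁅a, b⁆ ^ ((k : ℤ) - (l : ℤ) - (j : ℤ)) *
        b ^ (-(l : ℤ) - (j : ℤ)) * a ^ 2 * b ^ (-(l : ℤ) - (j : ℤ)) * a⁻¹ * b⁻¹⁆ =
      tailProduct a b k l (l + j - 1) / tailProduct a b k l (l + j) := by
  rw [tailProduct_of_ge_of_lt (by omega) (by omega), tailProduct_of_ge_of_lt (by omega) hjk,
    commutatorElement_zpow_eq_mul a b ((k : ℤ) - ↑(l + j - 1)), Nat.cast_sub (by omega),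
    div_eq_mul_inv]
  push_cast
  generalize ⁅a, b⁆ = c
  group

lemma commutator_eq_tailProduct_div_last {k l : ℕ} (h : l < k) :
    ⁅b * a * b ^ ((k : ℤ) + 1) * a⁻¹ * b⁻¹, b * a * b⁻¹ * a⁻¹ * b * a⁻¹ * b⁻¹⁆ =
      tailProduct a b k l (k - 1) / tailProduct a b k l k := by
  rw [tailProduct_self h, div_one, tailProduct_of_ge_of_lt (by omega) (by omega),
    Nat.cast_sub (by omega), Nat.cast_one, sub_sub_cancel, zpow_one]
  group

end TailProduct

/-- Let `k > l ≥ 0` and define `r₁,s₁,…,r_k,s_k ∈ F₂` by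
`r_i = y·x·y^{i−1}·x⁻¹·y⁻¹·x·y^{−i+1}·x⁻¹·y⁻¹`,
`s_i = y·x·y^{i−1}·x⁻¹·B^{l−i+1}·y·B^{k−l}·y^{−i}·x²·y^{−i+1}·x⁻¹·y⁻¹` for `i = 1,…,l`;
`r_{l+j} = y·x·y^{l+j}·x⁻¹·y⁻¹·x·y^{−l−j}·x⁻¹·y⁻¹`,
`s_{l+j} = y·x·y^{l+j}·x⁻¹·B^{k−l−j}·y^{−l−j}·x²·y^{−l−j}·x⁻¹·y⁻¹` for `j = 1,…,k−l−1`;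
`r_k = y·x·y^{k+1}·x⁻¹·y⁻¹` and `s_k = y·x·y⁻¹·x⁻¹·y·x⁻¹·y⁻¹`.
Then `[r₁,s₁][r₂,s₂]⋯[r_k,s_k] = B^l·(B^y)^{k−l}·B^k`. -/
theorem full_product_rs (k l : ℕ) (hkl : l < k)
    (r s : ℕ → F2)
    (hr1 : ∀ i : ℕ, 1 ≤ i → i ≤ l →
      r i = y * x * y ^ ((i : ℤ) - 1) * x⁻¹ * y⁻¹ * x * y ^ (-(i : ℤ) + 1) * x⁻¹ * y⁻¹)
    (hs1 : ∀ i : ℕ, 1 ≤ i → i ≤ l →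
      s i = y * x * y ^ ((i : ℤ) - 1) * x⁻¹ * B ^ ((l : ℤ) - (i : ℤ) + 1) * y *
        B ^ ((k : ℤ) - (l : ℤ)) * y ^ (-(i : ℤ)) * x ^ 2 * y ^ (-(i : ℤ) + 1) * x⁻¹ * y⁻¹)
    (hr2 : ∀ j : ℕ, 1 ≤ j → j ≤ k - l - 1 →
      r (l + j) = y * x * y ^ ((l : ℤ) + (j : ℤ)) * x⁻¹ * y⁻¹ * x *
        y ^ (-(l : ℤ) - (j : ℤ)) * x⁻¹ * y⁻¹)
    (hs2 : ∀ j : ℕ, 1 ≤ j → j ≤ k - l - 1 →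
      s (l + j) = y * x * y ^ ((l : ℤ) + (j : ℤ)) * x⁻¹ * B ^ ((k : ℤ) - (l : ℤ) - (j : ℤ)) *
        y ^ (-(l : ℤ) - (j : ℤ)) * x ^ 2 * y ^ (-(l : ℤ) - (j : ℤ)) * x⁻¹ * y⁻¹)
    (hrk : r k = y * x * y ^ ((k : ℤ) + 1) * x⁻¹ * y⁻¹)
    (hsk : s k = y * x * y⁻¹ * x⁻¹ * y * x⁻¹ * y⁻¹) :
    ((List.range k).map fun j => ⁅r (j + 1), s (j + 1)⁆).prod =
      B ^ l * (y * B * y⁻¹) ^ (k - l) * B ^ k := by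
  have hstep : ∀ j ∈ List.range k,
      ⁅r (j + 1), s (j + 1)⁆ = tailProduct x y k l j / tailProduct x y k l (j + 1) := by
    intro j hj
    rw [List.mem_range] at hj
    rcases le_or_gt (j + 1) l with hjl | hlj
    · rw [hr1 (j + 1) (by omega) hjl, hs1 (j + 1) (by omega) hjl]
      exact commutator_eq_tailProduct_div_of_le (by omega) hjl
    obtain hjk | hjk : j + 1 < k ∨ j + 1 = k := by omega
    · obtain ⟨i, hi⟩ : ∃ i, j + 1 = l + i := ⟨j + 1 - l, by omega⟩
      rw [hi, show j = l + i - 1 by omega, hr2 i (by omega) (by omega),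
        hs2 i (by omega) (by omega)]
      exact commutator_eq_tailProduct_div_of_gt (by omega) (by omega)
    · rw [hjk, show j = k - 1 by omega, hrk, hsk]
      exact commutator_eq_tailProduct_div_last hkl
  rw [List.map_congr_left hstep, List.prod_range_div', tailProduct_self hkl, div_one,
    tailProduct_zero hkl.le]
  rfl

end SurfaceEq
end
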